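/- arXiv:2405.02739 — 7 statements merged into one kernel-verified Lean document; each statement's English description precedes it below -/
import Mathlib

section
/- Let n ≥ 1 and let r = (r_{i,j})_{1≤i≤j≤n} be a family of nonnegative integers, extended by the convention r_{i,j} := 0 whenever i = 0 or j = n+1. Then there exists a representation M of the equioriented type A_n quiver over ℂ with r^M_{i,j} = r_{i,j} for all 1 ≤ i ≤ j ≤ n if and only if the following three conditions hold: (1) r_{i,j} ≥ r_{i,j+1} for all 1 ≤ i ≤ j < n; (2) r_{i−1,j} ≤ r_{i,j} for all 1 < i ≤ j ≤ n; (3) r_{i−1,j} − r_{i−1,j+1} ≤ r_{i,j} − r_{i,j+1} for all 1 < i ≤ j < n. -/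
open Module

/-- A representation of the equioriented type `A_n` quiver over `ℂ`: finite-dimensional
complex vector spaces `V i` (only the indices `1 ≤ i ≤ n` carry content, the spaces at
index `0` and at indices `> n` are required to be trivial) together with linear maps
`f i : V i → V (i+1)`. -/
structure ARep (n : ℕ) where
  V : ℕ → Type
  [instAddCommGroup : ∀ i, AddCommGroup (V i)]
  [instModule : ∀ i, Module ℂ (V i)]
  [instFiniteDimensional : ∀ i, FiniteDimensional ℂ (V i)]
  f : ∀ i, V i →ₗ[ℂ] V (i + 1)
  triv : ∀ i, i = 0 ∨ n < i → Subsingleton (V i)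

attribute [instance] ARep.instAddCommGroup ARep.instModule ARep.instFiniteDimensional

namespace ARep

/-- The composite map `f_{i,i+k} : M_i → M_{i+k}` (the identity for `k = 0`). -/
noncomputable def F {n : ℕ} (M : ARep n) (i : ℕ) : (k : ℕ) → (M.V i →ₗ[ℂ] M.V (i + k))
  | 0 => LinearMap.id
  | (k + 1) => (M.f (i + k)).comp (M.F i k)

/-- The rank sequence `r^M_{i,j} = rank f_{i,j}`.  (For `i = 0` the source space is
trivial and for `j = n+1` the target space is trivial, so the conventions
`r^M_{0,·} = 0 = r^M_{·,n+1}` hold automatically.) -/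
noncomputable def r {n : ℕ} (M : ARep n) (i j : ℕ) : ℕ :=
  Module.finrank ℂ (LinearMap.range (M.F i (j - i)))

end ARep

/-- A morphism of representations of the equioriented type `A_n` quiver. -/
structure ARepHom {n : ℕ} (M N : ARep n) where
  φ : ∀ i, M.V i →ₗ[ℂ] N.V i
  comm : ∀ i, (φ (i + 1)).comp (M.f i) = (N.f i).comp (φ i)

/-- Two representations are isomorphic if there is a morphism all of whose components
are bijective. -/
def ARepIso {n : ℕ} (M N : ARep n) : Prop :=
  ∃ h : ARepHom M N, ∀ i, Function.Bijective (h.φ i)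

/-- The condition for the interval representation `U_{i,j}` to have a nonzero space at
vertex `k`. -/
def Ucond (n i j k : ℕ) : Prop := 1 ≤ k ∧ k ≤ n ∧ i ≤ k ∧ k ≤ j

instance (n i j k : ℕ) : Decidable (Ucond n i j k) := by unfold Ucond; infer_instance

/-- The space of `U_{i,j}` at vertex `k`, realized as a submodule of `ℂ`. -/
noncomputable def Uspace (n i j k : ℕ) : Submodule ℂ ℂ := if Ucond n i j k then ⊤ else ⊥

/-- The indecomposable interval representation `U_{i,j}` (for `1 ≤ i ≤ j ≤ n`):
one-dimensional at the vertices `i ≤ k ≤ j`, zero elsewhere, with identity structure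
maps inside the interval. -/
noncomputable def Urep (n i j : ℕ) : ARep n where
  V k := ↥(Uspace n i j k)
  f k := LinearMap.restrict
    (if Ucond n i j k ∧ Ucond n i j (k + 1) then (LinearMap.id : ℂ →ₗ[ℂ] ℂ) else 0)
    (p := Uspace n i j k) (q := Uspace n i j (k + 1))
    (by
      intro x hx
      by_cases h : Ucond n i j k ∧ Ucond n i j (k + 1)
      · rw [if_pos h]
        simp [Uspace, if_pos h.2]
      · rw [if_neg h]
        simp)
  triv k hk := by
    have hbot : Uspace n i j k = ⊥ := by
      simp only [Uspace]; rw [if_neg]; unfold Ucond; omega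
    have h0 := (Submodule.eq_bot_iff _).mp hbot
    exact ⟨fun a b => Subtype.ext ((h0 a.1 a.2).trans (h0 b.1 b.2).symm)⟩

/-- The componentwise direct sum of two representations. -/
noncomputable def ARep.dsum {n : ℕ} (M N : ARep n) : ARep n where
  V i := M.V i × N.V i
  f i := (M.f i).prodMap (N.f i)
  triv i hi := by
    haveI := M.triv i hi
    haveI := N.triv i hi
    exact ⟨fun a b => Prod.ext (Subsingleton.elim _ _) (Subsingleton.elim _ _)⟩

/-- A representation is nonzero if some vector space is nonzero. -/
def ARep.Nonzero {n : ℕ} (M : ARep n) : Prop := ∃ i, ∃ v : M.V i, v ≠ 0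

/-- The index set of segments `1 ≤ i ≤ j ≤ n`. -/
def SegIdx (n : ℕ) : Type :=
  {p : Fin (n + 1) × Fin (n + 1) // 1 ≤ p.1.1 ∧ p.1.1 ≤ p.2.1}

instance (n : ℕ) : Fintype (SegIdx n) := by unfold SegIdx; infer_instance

/-- The direct sum `⊕_{1 ≤ i ≤ j ≤ n} U_{i,j}^{⊕ m i j}`, taken componentwise. -/
noncomputable def sumU (n : ℕ) (m : ℕ → ℕ → ℕ) : ARep n where
  V k := ∀ p : SegIdx n, Fin (m p.1.1.1 p.1.2.1) → (Urep n p.1.1.1 p.1.2.1).V k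
  f k := LinearMap.pi fun p =>
    (((Urep n p.1.1.1 p.1.2.1).f k).compLeft (Fin (m p.1.1.1 p.1.2.1))).comp
      (LinearMap.proj p)
  triv k hk := by
    haveI := fun p : SegIdx n => (Urep n p.1.1.1 p.1.2.1).triv k hk
    exact ⟨fun a b => funext fun p => Subsingleton.elim _ _⟩

/-- The space of morphisms `Hom(M,N)` realized as a subspace of the product of the
spaces of componentwise linear maps. -/
noncomputable def HomSubspace {n : ℕ} (M N : ARep n) :
    Submodule ℂ (∀ k, M.V k →ₗ[ℂ] N.V k) where
  carrier := {φ | ∀ k, (φ (k + 1)).comp (M.f k) = (N.f k).comp (φ k)}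
  add_mem' := by
    intro a b ha hb k
    simp only [Pi.add_apply, LinearMap.add_comp, LinearMap.comp_add, ha k, hb k]
  zero_mem' := by
    intro k
    simp
  smul_mem' := by
    intro c a ha k
    simp only [Pi.smul_apply, LinearMap.smul_comp, LinearMap.comp_smul, ha k]

/-- The quotient of a representation by a family of subspaces stable under the
structure maps. -/
noncomputable def ARep.quot {n : ℕ} (M : ARep n) (S : ∀ k, Submodule ℂ (M.V k))
    (h : ∀ k, S k ≤ (S (k + 1)).comap (M.f k)) : ARep n where
  V k := M.V k ⧸ S k
  f k := Submodule.mapQ (S k) (S (k + 1)) (M.f k) (h k)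
  triv k hk := by
    haveI := M.triv k hk
    refine ⟨fun a b => ?_⟩
    obtain ⟨x, rfl⟩ := Submodule.Quotient.mk_surjective _ a
    obtain ⟨y, rfl⟩ := Submodule.Quotient.mk_surjective _ b
    exact congrArg _ (Subsingleton.elim x y)

/-- The quotient `M / ι(L)` of `M` by the image of a morphism `ι : L → M`. -/
noncomputable def quotByHom {n : ℕ} {L M : ARep n} (ι : ARepHom L M) : ARep n :=
  M.quot (fun k => LinearMap.range (ι.φ k)) (by
    intro k x hx
    obtain ⟨y, rfl⟩ := hx
    rw [Submodule.mem_comap]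
    exact ⟨L.f k y, LinearMap.congr_fun (ι.comm k) y⟩)

/-- The subrepresentation of `M` given by a family of subspaces stable under the
structure maps. -/
noncomputable def ARep.sub {n : ℕ} (M : ARep n) (N : ∀ i, Submodule ℂ (M.V i))
    (h : ∀ i, ∀ x ∈ N i, M.f i x ∈ N (i + 1)) : ARep n where
  V i := ↥(N i)
  f i := (M.f i).restrict (h i)
  triv i hi := by
    haveI := M.triv i hi
    exact ⟨fun a b => Subtype.ext (Subsingleton.elim _ _)⟩

/-- The subquotient representation `P/S` of `M`, for families of subspaces
`S k ≤ P k` both stable under the structure maps. -/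
noncomputable def ARep.subquot {n : ℕ} (M : ARep n) (P S : ∀ k, Submodule ℂ (M.V k))
    (hSP : ∀ k, S k ≤ P k)
    (hP : ∀ k, ∀ x ∈ P k, M.f k x ∈ P (k + 1))
    (hS : ∀ k, ∀ x ∈ S k, M.f k x ∈ S (k + 1)) : ARep n where
  V k := ↥(P k) ⧸ (S k).comap (P k).subtype
  f k := Submodule.mapQ _ _ ((M.f k).restrict (hP k)) (by
    intro x hx
    rw [Submodule.mem_comap] at hx ⊢
    exact hS k x.1 hx)
  triv k hk := by
    haveI := M.triv k hk
    haveI : Subsingleton (↥(P k)) := ⟨fun a b => Subtype.ext (Subsingleton.elim _ _)⟩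
    refine ⟨fun a b => ?_⟩
    obtain ⟨x, rfl⟩ := Submodule.Quotient.mk_surjective _ a
    obtain ⟨y, rfl⟩ := Submodule.Quotient.mk_surjective _ b
    exact congrArg _ (Subsingleton.elim x y)

/-- A `σ`-compatible `ε`-form on the underlying graded vector space of `M` making `M`
an `ε`-representation: a nondegenerate bilinear form `B` on `M^0 = ⊕_i M_i` with
`B v w = ε B w v`, with `B (M_i) (M_j) = 0` unless `i + j = n + 1` (i.e. `j = σ(i)`),
and anti-compatible with the structure maps. -/
structure EpsForm (n : ℕ) (M : ARep n) (ε : ℂ) where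
  B : (∀ i, M.V i) →ₗ[ℂ] (∀ i, M.V i) →ₗ[ℂ] ℂ
  nondeg : ∀ v, (∀ w, B v w = 0) → v = 0
  eps_symm : ∀ v w, B v w = ε * B w v
  graded : ∀ (i j : ℕ) (v : M.V i) (w : M.V j), i + j ≠ n + 1 →
    B (Pi.single i v) (Pi.single j w) = 0
  compat : ∀ i, 1 ≤ i → i + 1 ≤ n → ∀ (v : M.V i) (w : M.V (n - i)),
    B (Pi.single (i + 1) (M.f i v)) (Pi.single (n - i) w)
      + B (Pi.single i v) (Pi.single (n - i + 1) (M.f (n - i) w)) = 0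

/-- The orthogonal complement, at vertex `p`, of the image of a morphism `ι : L → M`
with respect to the form `E`. -/
noncomputable def perpAt {n : ℕ} {L M : ARep n} {ε : ℂ} (E : EpsForm n M ε)
    (ι : ARepHom L M) (p : ℕ) : Submodule ℂ (M.V p) where
  carrier := {y | ∀ (q : ℕ) (x : M.V q), x ∈ LinearMap.range (ι.φ q) →
    E.B (Pi.single p y) (Pi.single q x) = 0}
  add_mem' := by
    intro a b ha hb q x hx
    rw [Pi.single_add, map_add, LinearMap.add_apply, ha q x hx, hb q x hx, add_zero]
  zero_mem' := by
    intro q x hx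
    rw [Pi.single_zero, map_zero, LinearMap.zero_apply]
  smul_mem' := by
    intro c a ha q x hx
    rw [Pi.single_smul, map_smul, LinearMap.smul_apply, ha q x hx, smul_zero]

/-!
Write `r^M_{i,j}` as the dimension of the image of `M_i` in `M_j`. The image in `M_{j+1}` is the
image under `f_j` of the image in `M_j`, which gives (1); the image of `M_{i-1}` in `M_j` lies in
that of `M_i`, which gives (2); and for subspaces `W₁ ≤ W₂` the kernel of `f_j` meets `W₁` in a
smaller space than `W₂`, so `f_j` loses less dimension on `W₁`, which is (3).

Conversely, (1)–(3) say exactly that the numbers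
`m_{a,b} = r_{a,b} - r_{a,b+1} - r_{a-1,b} + r_{a-1,b+1}` are nonnegative for `1 ≤ a ≤ b ≤ n`.
In `⊕ U_{a,b}^{m_{a,b}}` the rank `r_{i,j}` counts the intervals `[a,b] ⊇ [i,j]`, that is
`∑_{a ≤ i, b ≥ j} m_{a,b}`, and this double sum telescopes back to `r_{i,j}`.
-/

open Finset

section LinearAlgebra

variable {K V W : Type*} [DivisionRing K] [AddCommGroup V] [Module K V] [FiniteDimensional K V]
  [AddCommGroup W] [Module K W]

theorem Submodule.finrank_map_add_finrank_inf_ker (g : V →ₗ[K] W) (U : Submodule K V) :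
    finrank K (U.map g) + finrank K ↥(U ⊓ LinearMap.ker g) = finrank K U := by
  have hker : LinearMap.ker (g.domRestrict U) = (U ⊓ LinearMap.ker g).comap U.subtype := by
    rw [LinearMap.ker_domRestrict, Submodule.comap_inf, Submodule.comap_subtype_self, top_inf_eq]
  rw [← (g.domRestrict U).finrank_range_add_finrank_ker, LinearMap.range_domRestrict, hker,
    (Submodule.comapSubtypeEquivOfLe inf_le_left).finrank_eq]

theorem Submodule.finrank_add_finrank_map_le_of_le (g : V →ₗ[K] W) {U₁ U₂ : Submodule K V}
    (h : U₁ ≤ U₂) :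
    finrank K U₁ + finrank K (U₂.map g) ≤ finrank K U₂ + finrank K (U₁.map g) := by
  have := Submodule.finrank_mono (inf_le_inf_right (LinearMap.ker g) h)
  have := U₁.finrank_map_add_finrank_inf_ker g
  have := U₂.finrank_map_add_finrank_inf_ker g
  omega

end LinearAlgebra

section ExtendRestrict

variable {ι : Type*} {P Q R : ι → Prop} [DecidablePred P]

variable (P Q) in
def extendRestrict : ({t // P t} → ℂ) →ₗ[ℂ] ({t // Q t} → ℂ) :=
  LinearMap.pi fun s => if h : P s.1 then LinearMap.proj ⟨s.1, h⟩ else 0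

theorem extendRestrict_apply (x : {t // P t} → ℂ) (s : {t // Q t}) :
    extendRestrict P Q x s = if h : P s.1 then x ⟨s.1, h⟩ else 0 := by
  simp only [extendRestrict, LinearMap.pi_apply]
  split_ifs <;> rfl

theorem extendRestrict_comp [DecidablePred Q] (h : ∀ t, P t → R t → Q t) :
    extendRestrict Q R ∘ₗ extendRestrict P Q = extendRestrict P R := by
  refine LinearMap.ext fun x => funext fun s => ?_
  simp only [LinearMap.comp_apply, extendRestrict_apply]
  by_cases hP : P s.1
  · rw [dif_pos (h _ hP s.2), dif_pos hP]
  · rw [dif_neg hP]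
    split_ifs <;> simp

theorem extendRestrict_injective (h : ∀ t, P t → Q t) :
    Function.Injective (extendRestrict P Q) := by
  intro x y hxy
  funext t
  simpa [extendRestrict_apply, dif_pos t.2] using congrFun hxy ⟨t.1, h _ t.2⟩

theorem extendRestrict_surjective (h : ∀ t, Q t → P t) :
    Function.Surjective (extendRestrict P Q) := by
  classical
  intro y
  refine ⟨fun t => if hQ : Q t.1 then y ⟨t.1, hQ⟩ else 0, funext fun s => ?_⟩
  simp [extendRestrict_apply, dif_pos (h _ s.2), s.2]

theorem range_extendRestrict_le [DecidablePred Q] (h : ∀ t, R t → P t → Q t) :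
    LinearMap.range (extendRestrict P R) ≤ LinearMap.range (extendRestrict Q R) :=
  extendRestrict_comp (fun t hP hR => h t hR hP) ▸ LinearMap.range_comp_le_range _ _

theorem range_extendRestrict_congr [DecidablePred Q] (h : ∀ t, R t → (P t ↔ Q t)) :
    LinearMap.range (extendRestrict P R) = LinearMap.range (extendRestrict Q R) :=
  le_antisymm (range_extendRestrict_le fun t hR => (h t hR).1)
    (range_extendRestrict_le fun t hR => (h t hR).2)

end ExtendRestrict

theorem Finset.sum_Icc_sub_succ {G : Type*} [AddCommGroup G] (f : ℕ → G) {m n : ℕ}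
    (h : m ≤ n) : ∑ i ∈ Icc m n, (f i - f (i + 1)) = f m - f (n + 1) := by
  rw [← neg_sub, ← sum_Icc_sub h, ← sum_neg_distrib]
  simp only [neg_sub]

theorem Finset.sum_Icc_one_sub_pred {G : Type*} [AddCommGroup G] (f : ℕ → G) (n : ℕ) :
    ∑ i ∈ Icc 1 n, (f i - f (i - 1)) = f n - f 0 := by
  induction n with
  | zero => simp
  | succ n ih =>
    rw [sum_Icc_succ_top (by omega), ih, Nat.add_sub_cancel]
    abel

namespace ARep

variable {n : ℕ} (M : ARep n)

/-- The image of `M_i` in `M_j`; junk value `⊤` when `j < i`. -/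
noncomputable def image (i : ℕ) : (j : ℕ) → Submodule ℂ (M.V j)
  | 0 => ⊤
  | j + 1 => if j < i then ⊤ else (image i j).map (M.f j)

theorem image_self (i : ℕ) : M.image i i = ⊤ := by
  cases i with
  | zero => rfl
  | succ i => exact if_pos (Nat.lt_succ_self i)

theorem image_succ {i j : ℕ} (h : i ≤ j) : M.image i (j + 1) = (M.image i j).map (M.f j) := by
  rw [image, if_neg (Nat.not_lt.mpr h)]

theorem range_F (i : ℕ) : ∀ k, LinearMap.range (M.F i k) = M.image i (i + k)
  | 0 => (M.image_self i).symm ▸ LinearMap.range_id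
  | k + 1 => by
    change LinearMap.range ((M.f (i + k)).comp (M.F i k)) = M.image i (i + k + 1)
    rw [image_succ M (Nat.le_add_right i k), ← range_F i k, LinearMap.range_comp]

theorem r_eq_finrank_image {i j : ℕ} (h : i ≤ j) : M.r i j = finrank ℂ (M.image i j) := by
  obtain ⟨k, rfl⟩ := Nat.exists_eq_add_of_le h
  rw [r, Nat.add_sub_cancel_left, range_F]

theorem image_le_image_succ {i j : ℕ} (h : i < j) : M.image i j ≤ M.image (i + 1) j := by
  induction j, h using Nat.le_induction with
  | base => rw [image_self]; exact le_top
  | succ j hij ih =>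
    rw [image_succ M (by omega), image_succ M hij]
    exact Submodule.map_mono ih

theorem r_succ_right_le {i j : ℕ} (h : i ≤ j) : M.r i (j + 1) ≤ M.r i j := by
  rw [r_eq_finrank_image M h, r_eq_finrank_image M (Nat.le_succ_of_le h), image_succ M h]
  exact Submodule.finrank_map_le _ _

theorem r_le_r_succ_left {i j : ℕ} (h : i < j) : M.r i j ≤ M.r (i + 1) j := by
  rw [r_eq_finrank_image M h.le, r_eq_finrank_image M (show i + 1 ≤ j from h)]
  exact Submodule.finrank_mono (M.image_le_image_succ h)

theorem r_sub_r_succ_right_le {i j : ℕ} (h : i < j) :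
    (M.r i j : ℤ) - M.r i (j + 1) ≤ (M.r (i + 1) j : ℤ) - M.r (i + 1) (j + 1) := by
  have h' : i + 1 ≤ j := h
  rw [r_eq_finrank_image M h.le, r_eq_finrank_image M h', r_eq_finrank_image M (by omega),
    r_eq_finrank_image M (by omega), image_succ M h.le, image_succ M h']
  have := Submodule.finrank_add_finrank_map_le_of_le (M.f j) (M.image_le_image_succ h)
  omega

end ARep

def RankConditions (n : ℕ) (r : ℕ → ℕ → ℕ) : Prop :=
  (∀ i j, 1 ≤ i → i ≤ j → j < n → r i (j + 1) ≤ r i j) ∧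
  (∀ i j, 1 < i → i ≤ j → j ≤ n → r (i - 1) j ≤ r i j) ∧
  (∀ i j, 1 < i → i ≤ j → j < n →
    (r (i - 1) j : ℤ) - (r (i - 1) (j + 1) : ℤ) ≤ (r i j : ℤ) - (r i (j + 1) : ℤ))

theorem RankConditions.of_eqOn {n : ℕ} {r s : ℕ → ℕ → ℕ} (hr : RankConditions n r)
    (h : ∀ i j, 1 ≤ i → i ≤ j → j ≤ n → r i j = s i j) : RankConditions n s := by
  obtain ⟨h₁, h₂, h₃⟩ := hr
  refine ⟨fun i j hi hij hj => ?_, fun i j hi hij hj => ?_, fun i j hi hij hj => ?_⟩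
  · rw [← h i j hi hij hj.le, ← h i (j + 1) hi (by omega) hj]
    exact h₁ i j hi hij hj
  · rw [← h i j (by omega) hij hj, ← h (i - 1) j (by omega) (by omega) hj]
    exact h₂ i j hi hij hj
  · rw [← h i j (by omega) hij hj.le, ← h (i - 1) j (by omega) (by omega) hj.le,
      ← h i (j + 1) (by omega) (by omega) hj, ← h (i - 1) (j + 1) (by omega) (by omega) hj]
    exact h₃ i j hi hij hj

theorem ARep.rankConditions {n : ℕ} (M : ARep n) : RankConditions n M.r := by
  refine ⟨fun i j _ hij _ => M.r_succ_right_le hij, fun i j hi hij _ => ?_,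
    fun i j hi hij _ => ?_⟩
  all_goals obtain ⟨i, rfl⟩ : ∃ i', i = i' + 1 := ⟨i - 1, by omega⟩
  · simpa using M.r_le_r_succ_left (show i < j by omega)
  · simpa using M.r_sub_r_succ_right_le (show i < j by omega)

section IntervalRep

variable {n : ℕ} {ι : Type} [Fintype ι] (a b : ι → ℕ) (ha : ∀ t, 1 ≤ a t) (hb : ∀ t, b t ≤ n)

/-- The direct sum of the interval representations `U_{a t, b t}`, `t : ι`, written in the basis
of the summands: `M_k` has one coordinate for each interval `[a t, b t]` containing `k`.
It is reducible so that the instances on `V k` unfold to those of the function space. -/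
noncomputable abbrev intervalRep : ARep n where
  V k := {t // a t ≤ k ∧ k ≤ b t} → ℂ
  f k := extendRestrict _ _
  triv k hk := by
    have : IsEmpty {t // a t ≤ k ∧ k ≤ b t} :=
      ⟨fun t => by have := ha t.1; have := hb t.1; omega⟩
    infer_instance

theorem intervalRep_image {i j : ℕ} (hij : i ≤ j) :
    (intervalRep a b ha hb).image i j =
      LinearMap.range
        (extendRestrict (fun t => a t ≤ i ∧ j ≤ b t) (fun t => a t ≤ j ∧ j ≤ b t)) := by
  induction j, hij using Nat.le_induction with
  | base =>
    rw [ARep.image_self, eq_comm, LinearMap.range_eq_top]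
    exact extendRestrict_surjective fun _ => id
  | succ j hij ih =>
    rw [ARep.image_succ _ hij, ih, ← LinearMap.range_comp,
      extendRestrict_comp fun t hP hR => ⟨hP.1.trans hij, hP.2⟩]
    exact range_extendRestrict_congr fun t hR => by omega

theorem intervalRep_r {i j : ℕ} (hij : i ≤ j) :
    (intervalRep a b ha hb).r i j = Fintype.card {t // a t ≤ i ∧ j ≤ b t} := by
  rw [ARep.r_eq_finrank_image _ hij, intervalRep_image a b ha hb hij,
    LinearMap.finrank_range_of_inj (extendRestrict_injective fun t ht => ⟨by omega, ht.2⟩),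
    Module.finrank_fintype_fun_eq_card]

end IntervalRep

/-- `⊕_{1 ≤ a, b ≤ n} U_{a,b}^{m a b}`; the summands with `a > b` are zero. -/
noncomputable def intervalSum (n : ℕ) (m : ℕ → ℕ → ℕ) : ARep n :=
  intervalRep (ι := Σ p : ↥(Icc 1 n ×ˢ Icc 1 n), Fin (m p.1.1 p.1.2))
    (fun t => t.1.1.1) (fun t => t.1.1.2)
    (fun t => (mem_Icc.mp (mem_product.mp t.1.2).1).1)
    (fun t => (mem_Icc.mp (mem_product.mp t.1.2).2).2)

theorem intervalSum_r (n : ℕ) (m : ℕ → ℕ → ℕ) {i j : ℕ} (hij : i ≤ j) :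
    (intervalSum n m).r i j = ∑ a ∈ Icc 1 i, ∑ b ∈ Icc j n, m a b := by
  have hfilter : (Icc 1 n ×ˢ Icc 1 n).filter (fun p => p.1 ≤ i ∧ j ≤ p.2) =
      Icc 1 i ×ˢ Icc j n := by
    ext p
    simp only [mem_filter, mem_product, mem_Icc]
    omega
  rw [intervalSum, intervalRep_r _ _ _ _ hij, Fintype.card_subtype, card_eq_sum_ones, sum_filter,
    Fintype.sum_sigma, ← sum_product', ← hfilter, sum_filter, ← sum_coe_sort (Icc 1 n ×ˢ Icc 1 n)]
  refine sum_congr rfl fun p _ => ?_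
  split_ifs <;> simp

section Multiplicity

variable (n : ℕ) (r : ℕ → ℕ → ℕ)

def rankExt (i j : ℕ) : ℤ := if 1 ≤ i ∧ j ≤ n then r i j else 0

/-- The multiplicity of `U_{a,b}` in a representation with rank sequence `r`, by
inclusion–exclusion from `r_{i,j} = #{intervals [a, b] ⊇ [i, j]}`. -/
def intervalMult (a b : ℕ) : ℤ :=
  (rankExt n r a b - rankExt n r (a - 1) b) - (rankExt n r a (b + 1) - rankExt n r (a - 1) (b + 1))

theorem intervalMult_nonneg (h : RankConditions n r) {a b : ℕ} (ha : 1 ≤ a) (hab : a ≤ b)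
    (hb : b ≤ n) : 0 ≤ intervalMult n r a b := by
  obtain ⟨h₁, h₂, h₃⟩ := h
  simp only [intervalMult, rankExt]
  rcases Nat.lt_or_ge b n with hbn | hbn <;> rcases Nat.lt_or_ge 1 a with ha1 | ha1
  · have := h₃ a b ha1 hab hbn
    split_ifs <;> omega
  · have := h₁ a b ha hab hbn
    split_ifs <;> omega
  · have := h₂ a b ha1 hab hb
    split_ifs <;> omega
  · split_ifs <;> omega

theorem sum_intervalMult {i j : ℕ} (hi : 1 ≤ i) (hj : j ≤ n) :
    ∑ a ∈ Icc 1 i, ∑ b ∈ Icc j n, intervalMult n r a b = r i j := by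
  have hout (c : ℕ) : rankExt n r c (n + 1) = 0 := if_neg (by omega)
  have hrow (a : ℕ) : ∑ b ∈ Icc j n, intervalMult n r a b =
      rankExt n r a j - rankExt n r (a - 1) j := by
    unfold intervalMult
    rw [sum_Icc_sub_succ (fun b => rankExt n r a b - rankExt n r (a - 1) b) hj, hout, hout,
      sub_zero, sub_zero]
  rw [sum_congr rfl fun a _ => hrow a, sum_Icc_one_sub_pred (rankExt n r · j)]
  simp [rankExt, hi, hj]

end Multiplicity

theorem RankConditions.exists_arep {n : ℕ} {r : ℕ → ℕ → ℕ} (h : RankConditions n r) :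
    ∃ M : ARep n, ∀ i j, 1 ≤ i → i ≤ j → j ≤ n → M.r i j = r i j := by
  refine ⟨intervalSum n fun a b => (intervalMult n r a b).toNat, fun i j hi hij hj => ?_⟩
  rw [intervalSum_r _ _ hij, ← Nat.cast_inj (R := ℤ), ← sum_intervalMult n r hi hj]
  push_cast
  refine sum_congr rfl fun a ha => sum_congr rfl fun b hb => ?_
  rw [mem_Icc] at ha hb
  exact Int.toNat_of_nonneg (intervalMult_nonneg n r h ha.1 (by omega) hb.2)

theorem rank_sequence_characterization_general (n : ℕ) (r : ℕ → ℕ → ℕ) :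
    (∃ M : ARep n, ∀ i j, 1 ≤ i → i ≤ j → j ≤ n → M.r i j = r i j) ↔
      ((∀ i j, 1 ≤ i → i ≤ j → j < n → r i (j + 1) ≤ r i j) ∧
       (∀ i j, 1 < i → i ≤ j → j ≤ n → r (i - 1) j ≤ r i j) ∧
       (∀ i j, 1 < i → i ≤ j → j < n →
         (r (i - 1) j : ℤ) - (r (i - 1) (j + 1) : ℤ) ≤ (r i j : ℤ) - (r i (j + 1) : ℤ))) :=
  ⟨fun ⟨M, hM⟩ => M.rankConditions.of_eqOn hM, RankConditions.exists_arep⟩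

theorem rank_sequence_characterization (n : ℕ) (hn : 1 ≤ n) (r : ℕ → ℕ → ℕ) :
    (∃ M : ARep n, ∀ i j, 1 ≤ i → i ≤ j → j ≤ n → M.r i j = r i j) ↔
      ((∀ i j, 1 ≤ i → i ≤ j → j < n → r i (j + 1) ≤ r i j) ∧
       (∀ i j, 1 < i → i ≤ j → j ≤ n → r (i - 1) j ≤ r i j) ∧
       (∀ i j, 1 < i → i ≤ j → j < n →
         (r (i - 1) j : ℤ) - (r (i - 1) (j + 1) : ℤ) ≤ (r i j : ℤ) - (r i (j + 1) : ℤ))) :=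
  rank_sequence_characterization_general n r
end

section
/- Let M be a representation of the equioriented type A_n quiver over ℂ and suppose M is isomorphic to the direct sum ⊕_{1≤i≤j≤n} U_{i,j}^{⊕ m_{i,j}} for nonnegative integers m_{i,j} (direct sums of representations taken componentwise). Then for all 1 ≤ i ≤ j ≤ n, m_{i,j} = r^M_{i,j} − r^M_{i,j+1} − r^M_{i−1,j} + r^M_{i−1,j+1}, with the conventions r^M_{0,·} = 0 and r^M_{·,n+1} = 0. -/
open Module

section Aux

/-- The subtype of a pi submodule is equivalent to the pi of the subtypes. -/
noncomputable def piSubEquiv {ι : Type} {φ : ι → Type}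
    [∀ i, AddCommGroup (φ i)] [∀ i, Module ℂ (φ i)] (P : ∀ i, Submodule ℂ (φ i)) :
    ↥(Submodule.pi Set.univ P) ≃ₗ[ℂ] ∀ i, ↥(P i) where
  toFun x := fun i => ⟨x.1 i, x.2 i trivial⟩
  invFun y := ⟨fun i => (y i).1, fun i _ => (y i).2⟩
  map_add' _ _ := rfl
  map_smul' _ _ := rfl
  left_inv x := rfl
  right_inv y := rfl

lemma finrank_pi_submodule {ι : Type} [Fintype ι] {φ : ι → Type}
    [∀ i, AddCommGroup (φ i)] [∀ i, Module ℂ (φ i)] [∀ i, FiniteDimensional ℂ (φ i)]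
    (P : ∀ i, Submodule ℂ (φ i)) :
    Module.finrank ℂ ↥(Submodule.pi Set.univ P) = ∑ i, Module.finrank ℂ ↥(P i) := by
  rw [(piSubEquiv P).finrank_eq, Module.finrank_pi_fintype]

/-- rank sequences are isomorphism invariants -/
lemma r_eq_of_iso {n : ℕ} {M N : ARep n} (h : ARepIso M N) (i j : ℕ) :
    M.r i j = N.r i j := by
  obtain ⟨φ, hb⟩ := h
  have key : ∀ i k, (φ.φ (i + k)).comp (M.F i k) = (N.F i k).comp (φ.φ i) := by
    intro i k
    induction k with
    | zero => rfl
    | succ k ih =>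
      show (φ.φ (i + k + 1)).comp ((M.f (i + k)).comp (M.F i k))
          = ((N.f (i + k)).comp (N.F i k)).comp (φ.φ i)
      rw [← LinearMap.comp_assoc, φ.comm (i + k), LinearMap.comp_assoc, ih,
        ← LinearMap.comp_assoc]
  unfold ARep.r
  set k := j - i with hk
  have h1 : LinearMap.range (N.F i k) =
      Submodule.map (φ.φ (i + k)) (LinearMap.range (M.F i k)) := by
    rw [← LinearMap.range_comp, key i k, LinearMap.range_comp,
      LinearMap.range_eq_top.mpr (hb i).2, Submodule.map_top]
  rw [h1, show (φ.φ (i + k))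
      = ((LinearEquiv.ofBijective _ (hb (i + k)) : M.V (i + k) ≃ₗ[ℂ] N.V (i + k)) :
        M.V (i + k) →ₗ[ℂ] N.V (i + k)) from rfl, LinearEquiv.finrank_map_eq]

lemma urep_F_coe (n a b i k : ℕ) (h1 : Ucond n a b i) (h2 : Ucond n a b (i + k))
    (x : ↥(Uspace n a b i)) :
    ((Urep n a b).F i k x).val = x.val := by
  induction k with
  | zero => rfl
  | succ k ih =>
    have h3 : Ucond n a b (i + k) := by
      unfold Ucond at h1 h2 ⊢; omega
    show ((Urep n a b).f (i + k) ((Urep n a b).F i k x)).val = x.val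
    have hres : ((Urep n a b).f (i + k) ((Urep n a b).F i k x)).val
        = (if Ucond n a b (i + k) ∧ Ucond n a b (i + k + 1) then (LinearMap.id : ℂ →ₗ[ℂ] ℂ)
            else 0) ((Urep n a b).F i k x).val := rfl
    have h2' : Ucond n a b (i + k + 1) := h2
    rw [hres, if_pos (And.intro h3 h2'), LinearMap.id_apply]
    exact ih h3

lemma uspace_finrank_pos (n a b k : ℕ) (h : Ucond n a b k) :
    Module.finrank ℂ ((Urep n a b).V k) = 1 := by
  show Module.finrank ℂ ↥(Uspace n a b k) = 1
  unfold Uspace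
  rw [if_pos h]
  simpa using finrank_top ℂ ℂ

lemma uspace_finrank_zero (n a b k : ℕ) (h : ¬ Ucond n a b k) :
    Module.finrank ℂ ((Urep n a b).V k) = 0 := by
  show Module.finrank ℂ ↥(Uspace n a b k) = 0
  unfold Uspace
  rw [if_neg h]
  exact finrank_bot ℂ ℂ

/-- Rank of the composite map in an interval representation. -/
lemma urep_rank (n a b i k : ℕ) :
    Module.finrank ℂ ↥(LinearMap.range ((Urep n a b).F i k)) =
      if Ucond n a b i ∧ Ucond n a b (i + k) then 1 else 0 := by
  by_cases h : Ucond n a b i ∧ Ucond n a b (i + k)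
  · rw [if_pos h]
    have hinj : Function.Injective ((Urep n a b).F i k) := by
      intro x y hxy
      have : ((Urep n a b).F i k x).val = ((Urep n a b).F i k y).val := congrArg _ hxy
      rw [urep_F_coe n a b i k h.1 h.2 x, urep_F_coe n a b i k h.1 h.2 y] at this
      exact Subtype.ext this
    rw [LinearMap.finrank_range_of_inj hinj]
    exact uspace_finrank_pos n a b i h.1
  · rw [if_neg h]
    rcases not_and_or.mp h with h' | h'
    · have hle := LinearMap.finrank_range_le ((Urep n a b).F i k)
      rw [uspace_finrank_zero n a b i h'] at hle
      omega
    · have hle := Submodule.finrank_le (LinearMap.range ((Urep n a b).F i k))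
      rw [uspace_finrank_zero n a b (i + k) h'] at hle
      omega

lemma sumU_F_apply (n : ℕ) (m : ℕ → ℕ → ℕ) (i k : ℕ) (v : (sumU n m).V i)
    (p : SegIdx n) (e : Fin (m p.1.1.1 p.1.2.1)) :
    ((sumU n m).F i k v) p e = (Urep n p.1.1.1 p.1.2.1).F i k (v p e) := by
  induction k with
  | zero => rfl
  | succ k ih =>
    show ((sumU n m).f (i + k) ((sumU n m).F i k v)) p e = _
    show (Urep n p.1.1.1 p.1.2.1).f (i + k) (((sumU n m).F i k v) p e) = _
    rw [ih]
    rfl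

lemma sumU_range (n : ℕ) (m : ℕ → ℕ → ℕ) (i k : ℕ) :
    LinearMap.range ((sumU n m).F i k) =
      Submodule.pi Set.univ (fun p : SegIdx n =>
        Submodule.pi Set.univ (fun _ : Fin (m p.1.1.1 p.1.2.1) =>
          LinearMap.range ((Urep n p.1.1.1 p.1.2.1).F i k))) := by
  ext w
  simp only [Submodule.mem_pi, Set.mem_univ, forall_true_left, LinearMap.mem_range]
  constructor
  · rintro ⟨v, rfl⟩ p _ e _
    exact ⟨v p e, (sumU_F_apply n m i k v p e).symm⟩
  · intro hw
    choose v hv using fun p e => hw p trivial e trivial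
    exact ⟨v, funext fun p => funext fun e => (sumU_F_apply n m i k v p e).trans (hv p e)⟩

lemma sumU_rank (n : ℕ) (m : ℕ → ℕ → ℕ) (i k : ℕ) :
    Module.finrank ℂ ↥(LinearMap.range ((sumU n m).F i k)) = ∑ p : SegIdx n,
      m p.1.1.1 p.1.2.1 *
        (if Ucond n p.1.1.1 p.1.2.1 i ∧ Ucond n p.1.1.1 p.1.2.1 (i + k) then 1 else 0) := by
  rw [sumU_range]
  refine (finrank_pi_submodule _).trans ?_
  refine Finset.sum_congr rfl fun p _ => ?_
  refine (finrank_pi_submodule _).trans ?_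
  rw [urep_rank, Finset.sum_const, Finset.card_univ, Fintype.card_fin, smul_eq_mul]

lemma sumU_r (n : ℕ) (m : ℕ → ℕ → ℕ) (i j : ℕ) (hij : i ≤ j) :
    ((sumU n m).r i j : ℤ) = ∑ p : SegIdx n,
      (m p.1.1.1 p.1.2.1 : ℤ) *
        (if Ucond n p.1.1.1 p.1.2.1 i ∧ Ucond n p.1.1.1 p.1.2.1 j then 1 else 0) := by
  have hkey := sumU_rank n m i (j - i)
  simp only [show i + (j - i) = j from by omega] at hkey
  unfold ARep.r
  rw [hkey]
  push_cast
  rfl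

instance (n : ℕ) : DecidableEq (SegIdx n) := by unfold SegIdx; infer_instance

end Aux

theorem multiplicities_from_rank_sequence (n : ℕ) (hn : 1 ≤ n) (M : ARep n)
    (m : ℕ → ℕ → ℕ) (hiso : ARepIso M (sumU n m)) :
    ∀ i j, 1 ≤ i → i ≤ j → j ≤ n →
      (m i j : ℤ) = (M.r i j : ℤ) - (M.r i (j + 1) : ℤ)
        - (M.r (i - 1) j : ℤ) + (M.r (i - 1) (j + 1) : ℤ) := by
  intro i j h1i hij hjn
  have hM : ∀ a b, (M.r a b : ℤ) = ((sumU n m).r a b : ℤ) := fun a b => by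
    rw [r_eq_of_iso hiso]
  rw [hM, hM, hM, hM, sumU_r n m i j hij, sumU_r n m i (j + 1) (by omega),
    sumU_r n m (i - 1) j (by omega), sumU_r n m (i - 1) (j + 1) (by omega),
    ← Finset.sum_sub_distrib, ← Finset.sum_sub_distrib, ← Finset.sum_add_distrib]
  set p0 : SegIdx n := ⟨(⟨i, by omega⟩, ⟨j, by omega⟩), ⟨h1i, hij⟩⟩ with hp0
  have key : ∀ p : SegIdx n,
      (m p.1.1.1 p.1.2.1 : ℤ) *
          (if Ucond n p.1.1.1 p.1.2.1 i ∧ Ucond n p.1.1.1 p.1.2.1 j then 1 else 0)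
        - (m p.1.1.1 p.1.2.1 : ℤ) *
          (if Ucond n p.1.1.1 p.1.2.1 i ∧ Ucond n p.1.1.1 p.1.2.1 (j + 1) then 1 else 0)
        - (m p.1.1.1 p.1.2.1 : ℤ) *
          (if Ucond n p.1.1.1 p.1.2.1 (i - 1) ∧ Ucond n p.1.1.1 p.1.2.1 j then 1 else 0)
        + (m p.1.1.1 p.1.2.1 : ℤ) *
          (if Ucond n p.1.1.1 p.1.2.1 (i - 1) ∧ Ucond n p.1.1.1 p.1.2.1 (j + 1) then 1 else 0)
      = if p = p0 then (m i j : ℤ) else 0 := by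
    intro p
    have hbn : p.1.2.1 ≤ n := by have := p.1.2.isLt; omega
    have hpa : 1 ≤ p.1.1.1 := p.2.1
    have hpab : p.1.1.1 ≤ p.1.2.1 := p.2.2
    have hiff : (p = p0) ↔ (p.1.1.1 = i ∧ p.1.2.1 = j) := by
      constructor
      · rintro rfl; exact ⟨rfl, rfl⟩
      · rintro ⟨ha, hb⟩
        exact Subtype.ext (Prod.ext (Fin.ext ha) (Fin.ext hb))
    have c1 : (if Ucond n p.1.1.1 p.1.2.1 i ∧ Ucond n p.1.1.1 p.1.2.1 j then (1:ℤ) else 0)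
        = if p.1.1.1 ≤ i ∧ j ≤ p.1.2.1 then 1 else 0 := by
      refine if_congr ?_ rfl rfl
      unfold Ucond
      constructor <;> intro h' <;> omega
    have c2 : (if Ucond n p.1.1.1 p.1.2.1 i ∧ Ucond n p.1.1.1 p.1.2.1 (j + 1) then (1:ℤ) else 0)
        = if p.1.1.1 ≤ i ∧ j + 1 ≤ p.1.2.1 then 1 else 0 := by
      refine if_congr ?_ rfl rfl
      unfold Ucond
      constructor <;> intro h' <;> omega
    have c3 : (if Ucond n p.1.1.1 p.1.2.1 (i - 1) ∧ Ucond n p.1.1.1 p.1.2.1 j then (1:ℤ) else 0)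
        = if p.1.1.1 ≤ i - 1 ∧ j ≤ p.1.2.1 then 1 else 0 := by
      refine if_congr ?_ rfl rfl
      unfold Ucond
      constructor <;> intro h' <;> omega
    have c4 : (if Ucond n p.1.1.1 p.1.2.1 (i - 1) ∧ Ucond n p.1.1.1 p.1.2.1 (j + 1) then (1:ℤ)
          else 0)
        = if p.1.1.1 ≤ i - 1 ∧ j + 1 ≤ p.1.2.1 then 1 else 0 := by
      refine if_congr ?_ rfl rfl
      unfold Ucond
      constructor <;> intro h' <;> omega
    rw [c1, c2, c3, c4, if_congr hiff rfl rfl]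
    by_cases h5 : p.1.1.1 = i ∧ p.1.2.1 = j
    · rw [if_pos h5, h5.1, h5.2, if_pos ⟨le_refl i, le_refl j⟩, if_neg (by omega),
        if_neg (by omega), if_neg (by omega)]
      ring
    · rw [if_neg h5]
      by_cases hA : p.1.1.1 ≤ i <;> by_cases hB : j ≤ p.1.2.1 <;>
        by_cases hC : p.1.1.1 ≤ i - 1 <;> by_cases hD : j + 1 ≤ p.1.2.1 <;>
        simp only [hA, hB, hC, hD, and_true, true_and, and_false, false_and, if_true, if_false,
          not_true, not_false_iff, if_pos, if_neg, not_false_eq_true, mul_one, mul_zero] <;>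
        first | ring1 | omega | (exfalso; omega)
  rw [Finset.sum_congr rfl fun p _ => key p,
    Finset.sum_ite_eq' Finset.univ p0 (fun _ => (m i j : ℤ)), if_pos (Finset.mem_univ p0)]
end

section
/- Let M be a representation of the equioriented type A_n quiver over ℂ and let 1 ≤ i ≤ j ≤ n. Then there exists an injective morphism U_{i,j} → M (a morphism all of whose components are injective) if and only if r^M_{i,j} − r^M_{i,j+1} > 0 (with the convention r^M_{i,n+1} := 0). -/
open Module

/-!
An injective morphism `U_{i,j} → M` is determined by the image `x ∈ M_i` of the generator at
vertex `i`: commutativity forces the image at vertex `k` to be `f_{i,k} x`, so injectivity says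
`f_{i,j} x ≠ 0`, and since `U_{i,j}` vanishes at `j + 1`, also `f_{i,j+1} x = 0`. Conversely such
an `x` spans a copy of `U_{i,j}`. Hence an embedding exists iff `ker f_{i,j} ⊊ ker f_{i,j+1}`,
which by rank–nullity is the strict inequality `r_{i,j+1} < r_{i,j}`.
-/

theorem LinearMap.exists_apply_ne_zero_comp_eq_zero_iff {K V W X : Type*} [Field K]
    [AddCommGroup V] [Module K V] [FiniteDimensional K V] [AddCommGroup W] [Module K W]
    [AddCommGroup X] [Module K X] (f : V →ₗ[K] W) (g : W →ₗ[K] X) :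
    (∃ x, f x ≠ 0 ∧ g (f x) = 0) ↔ finrank K (range (g ∘ₗ f)) < finrank K (range f) := by
  have hle : ker f ≤ ker (g ∘ₗ f) := ker_le_ker_comp f g
  have hf := f.finrank_range_add_finrank_ker
  have hgf := (g ∘ₗ f).finrank_range_add_finrank_ker
  calc (∃ x, f x ≠ 0 ∧ g (f x) = 0) ↔ ker f < ker (g ∘ₗ f) := by
        simp [SetLike.lt_iff_le_and_exists, hle, and_comm]
    _ ↔ finrank K (ker f) < finrank K (ker (g ∘ₗ f)) :=
        ⟨Submodule.finrank_lt_finrank_of_lt, Submodule.lt_of_le_of_finrank_lt_finrank hle⟩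
    _ ↔ _ := by omega

namespace ARep

variable {n : ℕ}

theorem F_succ_apply (M : ARep n) (i k : ℕ) (x : M.V i) :
    M.F i (k + 1) x = M.f (i + k) (M.F i k x) := rfl

theorem r_add (M : ARep n) (i k : ℕ) : M.r i (i + k) = finrank ℂ (LinearMap.range (M.F i k)) := by
  rw [r, Nat.add_sub_cancel_left]

theorem F_add_apply_eq_zero (M : ARep n) {i q : ℕ} {x : M.V i} (hx : M.F i q x = 0) :
    ∀ s, M.F i (q + s) x = 0
  | 0 => hx
  | s + 1 => by
    change M.f (i + (q + s)) (M.F i (q + s) x) = 0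
    rw [F_add_apply_eq_zero M hx s, map_zero]

/-- `orbit M i x p = f_{i,p} x` for `p ≥ i`; the values at `p < i` are irrelevant. -/
noncomputable def orbit (M : ARep n) (i : ℕ) (x : M.V i) : ∀ p, M.V p
  | 0 => 0
  | p + 1 => if h : i = p + 1 then h ▸ x else M.f p (orbit M i x p)

theorem orbit_succ (M : ARep n) {i p : ℕ} (x : M.V i) (hip : i ≤ p) :
    M.orbit i x (p + 1) = M.f p (M.orbit i x p) := by
  rw [orbit, dif_neg (by omega)]

theorem orbit_add (M : ARep n) {i : ℕ} (hi : 1 ≤ i) (x : M.V i) :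
    ∀ k, M.orbit i x (i + k) = M.F i k x
  | 0 => by
    obtain ⟨p, rfl⟩ : ∃ p, i = p + 1 := ⟨i - 1, by omega⟩
    change M.orbit (p + 1) x (p + 1) = x
    rw [orbit, dif_pos rfl]
  | k + 1 => by
    change M.orbit i x (i + k + 1) = M.f (i + k) (M.F i k x)
    rw [orbit_succ M x (Nat.le_add_right i k), orbit_add M hi x k]

end ARep

theorem ARepHom.apply_F {n : ℕ} {M N : ARep n} (ι : ARepHom M N) (i : ℕ) (x : M.V i) :
    ∀ k, ι.φ (i + k) (M.F i k x) = N.F i k (ι.φ i x)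
  | 0 => rfl
  | k + 1 => by
    rw [ARep.F_succ_apply, ARep.F_succ_apply, ← apply_F ι i x k]
    exact LinearMap.congr_fun (ι.comm (i + k)) _

namespace Urep

variable {n i j : ℕ}

theorem subsingleton_V {p : ℕ} (hp : ¬Ucond n i j p) : Subsingleton ((Urep n i j).V p) := by
  have hbot : Uspace n i j p = ⊥ := if_neg hp
  change Subsingleton (Uspace n i j p)
  rw [hbot]
  infer_instance

noncomputable def one {p : ℕ} (hp : Ucond n i j p) : (Urep n i j).V p :=
  ⟨1, by simp [Uspace, if_pos hp]⟩

theorem one_ne_zero {p : ℕ} (hp : Ucond n i j p) : one hp ≠ 0 :=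
  fun h => _root_.one_ne_zero (congrArg Subtype.val h)

theorem coe_f_apply {p : ℕ} (u : (Urep n i j).V p) :
    Subtype.val ((Urep n i j).f p u) =
      if Ucond n i j p ∧ Ucond n i j (p + 1) then Subtype.val u else 0 := by
  change (if Ucond n i j p ∧ Ucond n i j (p + 1) then LinearMap.id else 0) (Subtype.val u) = _
  split_ifs <;> rfl

theorem f_one {p : ℕ} (hp : Ucond n i j p) (hp' : Ucond n i j (p + 1)) :
    (Urep n i j).f p (one hp) = one hp' :=
  Subtype.ext (by rw [coe_f_apply, if_pos ⟨hp, hp'⟩]; rfl)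

theorem F_one {k : ℕ} (hk : Ucond n i j (i + k)) (hi : Ucond n i j i) :
    ∀ q (hq : q ≤ k), (Urep n i j).F i q (one hi) = one (p := i + q) (by unfold Ucond at *; omega)
  | 0, _ => rfl
  | q + 1, hq => by
    rw [ARep.F_succ_apply, F_one hk hi q (by omega)]
    exact f_one _ _

end Urep

theorem ARepHom.exists_F_ne_zero_of_injective {n i k : ℕ} {M : ARep n} (hi : 1 ≤ i) (hk : i + k ≤ n)
    (ι : ARepHom (Urep n i (i + k)) M) (hι : ∀ p, Function.Injective (ι.φ p)) :
    ∃ x : M.V i, M.F i k x ≠ 0 ∧ M.f (i + k) (M.F i k x) = 0 := by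
  have hUi : Ucond n i (i + k) i := by unfold Ucond; omega
  have hUk : Ucond n i (i + k) (i + k) := by unfold Ucond; omega
  have : Subsingleton ((Urep n i (i + k)).V (i + k + 1)) :=
    Urep.subsingleton_V (by unfold Ucond; omega)
  have hF : M.F i k (ι.φ i (Urep.one hUi)) = ι.φ (i + k) (Urep.one hUk) := by
    rw [← ι.apply_F, Urep.F_one hUk hUi k le_rfl]
  refine ⟨ι.φ i (Urep.one hUi), ?_, ?_⟩
  · rw [hF]
    exact (map_ne_zero_iff _ (hι _)).2 (Urep.one_ne_zero hUk)
  · calc M.f (i + k) (M.F i k (ι.φ i (Urep.one hUi)))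
        = ι.φ (i + k + 1) ((Urep n i (i + k)).f (i + k) (Urep.one hUk)) := by
          rw [hF]
          exact (LinearMap.congr_fun (ι.comm (i + k)) _).symm
      _ = 0 := by rw [Subsingleton.elim ((Urep n i (i + k)).f (i + k) _) 0, map_zero]

/-- The morphism `U_{i,i+k} → M` sending the generator at vertex `i` to `x`. -/
noncomputable def ARep.intervalHom {n i k : ℕ} (M : ARep n) (hi : 1 ≤ i) {x : M.V i}
    (hx : M.f (i + k) (M.F i k x) = 0) : ARepHom (Urep n i (i + k)) M where
  φ p := LinearMap.toSpanSingleton ℂ (M.V p) (M.orbit i x p) ∘ₗ (Uspace n i (i + k) p).subtype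
  comm p := by
    ext u
    change Subtype.val ((Urep n i (i + k)).f p u) • M.orbit i x (p + 1) =
      M.f p (Subtype.val u • M.orbit i x p)
    rw [Urep.coe_f_apply, map_smul]
    by_cases hp : Ucond n i (i + k) p
    swap
    · have := Urep.subsingleton_V hp
      have hu : Subtype.val u = 0 := by rw [Subsingleton.elim u 0]; rfl
      rw [if_neg (fun h => hp h.1), zero_smul, hu, zero_smul]
    by_cases hp' : Ucond n i (i + k) (p + 1)
    · rw [if_pos ⟨hp, hp'⟩, M.orbit_succ x hp.2.2.1]
    · rcases (by unfold Ucond at hp hp'; omega : p = i + k ∨ n < p + 1) with rfl | hn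
      · rw [if_neg (fun h => hp' h.2), M.orbit_add hi, hx, zero_smul, smul_zero]
      · have := M.triv (p + 1) (Or.inr hn)
        exact Subsingleton.elim _ _

theorem ARep.intervalHom_injective {n i k : ℕ} (M : ARep n) (hi : 1 ≤ i) {x : M.V i}
    (hx : M.f (i + k) (M.F i k x) = 0) (hx0 : M.F i k x ≠ 0) (p : ℕ) :
    Function.Injective ((M.intervalHom hi hx).φ p) := by
  by_cases hp : Ucond n i (i + k) p
  · obtain ⟨q, rfl⟩ : ∃ q, p = i + q := ⟨p - i, by unfold Ucond at hp; omega⟩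
    have horbit : M.orbit i x (i + q) ≠ 0 := by
      rw [M.orbit_add hi]
      intro h0
      apply hx0
      have := M.F_add_apply_eq_zero h0 (k - q)
      rwa [show q + (k - q) = k by unfold Ucond at hp; omega] at this
    exact (smul_left_injective ℂ horbit).comp Subtype.val_injective
  · have := Urep.subsingleton_V hp
    exact Function.injective_of_subsingleton _

theorem interval_embeds_iff_general (n : ℕ) (M : ARep n) (i j : ℕ)
    (h1 : 1 ≤ i) (hij : i ≤ j) (hj : j ≤ n) :
    (∃ ι : ARepHom (Urep n i j) M, ∀ k, Function.Injective (ι.φ k)) ↔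
      0 < (M.r i j : ℤ) - (M.r i (j + 1) : ℤ) := by
  obtain ⟨k, rfl⟩ := Nat.exists_eq_add_of_le hij
  have hr : M.r i (i + k + 1) = finrank ℂ (LinearMap.range (M.f (i + k) ∘ₗ M.F i k)) :=
    M.r_add i (k + 1)
  rw [M.r_add, hr]
  calc _ ↔ ∃ x, M.F i k x ≠ 0 ∧ M.f (i + k) (M.F i k x) = 0 :=
        ⟨fun ⟨ι, hι⟩ => ι.exists_F_ne_zero_of_injective h1 hj hι,
          fun ⟨_, hx0, hx⟩ => ⟨M.intervalHom h1 hx, M.intervalHom_injective h1 hx hx0⟩⟩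
    _ ↔ _ := LinearMap.exists_apply_ne_zero_comp_eq_zero_iff _ _
    _ ↔ _ := by omega

theorem interval_embeds_iff (n : ℕ) (hn : 1 ≤ n) (M : ARep n) (i j : ℕ)
    (h1 : 1 ≤ i) (hij : i ≤ j) (hj : j ≤ n) :
    (∃ ι : ARepHom (Urep n i j) M, ∀ k, Function.Injective (ι.φ k)) ↔
      0 < (M.r i j : ℤ) - (M.r i (j + 1) : ℤ) :=
  interval_embeds_iff_general n M i j h1 hij hj
end

section
/- Let M be a representation of the equioriented type A_n quiver over ℂ and let 1 ≤ i ≤ j ≤ n. Then there exists a surjective morphism M → U_{i,j} (a morphism all of whose components are surjective) if and only if r^M_{i,j} − r^M_{i−1,j} > 0 (with the convention r^M_{0,j} := 0). -/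
open Module

namespace ARep

noncomputable def castE {n : ℕ} (M : ARep n) : ∀ {a b : ℕ}, a = b → (M.V a ≃ₗ[ℂ] M.V b)
  | _, _, rfl => LinearEquiv.refl ℂ _

lemma castE_castE {n : ℕ} (M : ARep n) {a b c : ℕ} (h : a = b) (h' : b = c) (x : M.V a) :
    M.castE h' (M.castE h x) = M.castE (h.trans h') x := by
  subst h; subst h'; rfl

lemma f_comp_castE {n : ℕ} (M : ARep n) {a b : ℕ} (h : a = b) (h' : a + 1 = b + 1) :
    (M.f b).comp (M.castE h).toLinearMap = (M.castE h').toLinearMap.comp (M.f a) := by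
  subst h; rfl

lemma F_bot {n : ℕ} (M : ARep n) (i : ℕ) :
    ∀ b (h : (i + 1) + b = i + (b + 1)),
      M.F i (b + 1) = (M.castE h).toLinearMap.comp ((M.F (i + 1) b).comp (M.f i))
  | 0, h => by rfl
  | (b + 1), h => by
    have h0 : (i + 1) + b = i + (b + 1) := by omega
    show (M.f (i + (b + 1))).comp (M.F i (b + 1)) = _
    rw [F_bot M i b h0, ← LinearMap.comp_assoc, f_comp_castE M h0 h]
    rfl

lemma rank_aux {n : ℕ} (M : ARep n) (i' j : ℕ) (hij : i' + 1 ≤ j) :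
    M.r i' j = Module.finrank ℂ
      (LinearMap.range ((M.F (i' + 1) (j - (i' + 1))).comp (M.f i'))) := by
  have key : ∀ b, Module.finrank ℂ (LinearMap.range (M.F i' (b + 1))) =
      Module.finrank ℂ (LinearMap.range ((M.F (i' + 1) b).comp (M.f i'))) := by
    intro b
    rw [M.F_bot i' b (by omega), LinearMap.range_comp]
    exact LinearEquiv.finrank_map_eq _ _
  have harg : j - i' = (j - (i' + 1)) + 1 := by omega
  show (fun m => Module.finrank ℂ (LinearMap.range (M.F i' m))) (j - i') = _
  rw [harg]
  exact key _

lemma F_index_congr {n J : ℕ} (M : ARep n) (L : M.V J →ₗ[ℂ] ℂ) (k : ℕ) {m m' : ℕ}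
    (e : m = m') (hm : k + m = J) (hm' : k + m' = J) :
    L.comp ((M.castE hm).toLinearMap.comp (M.F k m))
      = L.comp ((M.castE hm').toLinearMap.comp (M.F k m')) := by
  subst e; rfl

lemma comp_castE_F_succ {n J : ℕ} (M : ARep n) (L : M.V J →ₗ[ℂ] ℂ) (k b : ℕ)
    (h1 : (k + 1) + b = J) (h2 : k + (b + 1) = J) :
    (L.comp ((M.castE h1).toLinearMap.comp (M.F (k + 1) b))).comp (M.f k)
      = L.comp ((M.castE h2).toLinearMap.comp (M.F k (b + 1))) := by
  rw [M.F_bot k b (show (k + 1) + b = k + (b + 1) by omega)]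
  ext x
  simp only [LinearMap.comp_apply, LinearEquiv.coe_coe]
  rw [M.castE_castE]

end ARep

theorem interval_quotient_iff (n : ℕ) (hn : 1 ≤ n) (M : ARep n) (i j : ℕ)
    (h1 : 1 ≤ i) (hij : i ≤ j) (hj : j ≤ n) :
    (∃ π : ARepHom M (Urep n i j), ∀ k, Function.Surjective (π.φ k)) ↔
      0 < (M.r i j : ℤ) - (M.r (i - 1) j : ℤ) := by
  obtain ⟨i', rfl⟩ : ∃ i', i = i' + 1 := ⟨i - 1, by omega⟩
  simp only [Nat.add_sub_cancel]
  set b : ℕ := j - (i' + 1) with hb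
  set g : M.V (i' + 1) →ₗ[ℂ] M.V ((i' + 1) + b) := M.F (i' + 1) b with hg
  set A : Submodule ℂ (M.V ((i' + 1) + b)) := LinearMap.range (g.comp (M.f i')) with hA
  set B : Submodule ℂ (M.V ((i' + 1) + b)) := LinearMap.range g with hB
  have hAB : A ≤ B := by
    rintro _ ⟨x, rfl⟩
    exact ⟨M.f i' x, rfl⟩
  have hrB : M.r (i' + 1) j = finrank ℂ B := rfl
  have hrA : M.r i' j = finrank ℂ A := ARep.rank_aux M i' j (by omega)
  have hUi : Ucond n (i' + 1) j (i' + 1) := ⟨by omega, by omega, by omega, by omega⟩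
  constructor
  · rintro ⟨π, hπ⟩
    set ℓ : ∀ k, M.V k →ₗ[ℂ] ℂ :=
      fun k => (Uspace n (i' + 1) j k).subtype.comp (π.φ k) with hℓ
    have hcomm : ∀ k, (ℓ (k + 1)).comp (M.f k) =
        if Ucond n (i' + 1) j k ∧ Ucond n (i' + 1) j (k + 1) then ℓ k else 0 := by
      intro k
      ext x
      have h1 : (π.φ (k + 1)) (M.f k x) = ((Urep n (i' + 1) j).f k) (π.φ k x) :=
        LinearMap.congr_fun (π.comm k) x
      have h2 : (ℓ (k + 1)) (M.f k x)
          = (if Ucond n (i' + 1) j k ∧ Ucond n (i' + 1) j (k + 1)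
              then (LinearMap.id : ℂ →ₗ[ℂ] ℂ) else 0) ((Uspace n (i' + 1) j k).subtype (π.φ k x)) := by
        have h3 := congrArg (fun z => ((Uspace n (i' + 1) j (k + 1)).subtype) z) h1
        simp only [hℓ, LinearMap.comp_apply, Submodule.coe_subtype]
        exact h3.trans rfl
      simp only [LinearMap.comp_apply]
      rw [h2]
      split_ifs with hc
      · rfl
      · rfl
    have K1 : ∀ m, (i' + 1) + m ≤ j →
        (ℓ ((i' + 1) + m)).comp (M.F (i' + 1) m) = ℓ (i' + 1) := by
      intro m
      induction m with
      | zero => intro _; ext x; rfl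
      | succ m ih =>
        intro hm
        show ((ℓ ((i' + 1) + m + 1)).comp
          ((M.f ((i' + 1) + m)).comp (M.F (i' + 1) m))) = ℓ (i' + 1)
        rw [← LinearMap.comp_assoc, hcomm ((i' + 1) + m),
          if_pos ⟨⟨by omega, by omega, by omega, by omega⟩,
            ⟨by omega, by omega, by omega, by omega⟩⟩]
        exact ih (by omega)
    have K2 := hcomm i'
    rw [if_neg (by simp only [Ucond]; omega)] at K2
    have hmem1 : (1 : ℂ) ∈ Uspace n (i' + 1) j (i' + 1) := by
      simp only [Uspace, if_pos hUi]; trivial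
    obtain ⟨x0, hx0⟩ := hπ (i' + 1) ⟨1, hmem1⟩
    have hx0' : ℓ (i' + 1) x0 = 1 := by
      simp only [hℓ, LinearMap.comp_apply, Submodule.coe_subtype]
      exact (congrArg Subtype.val hx0).trans rfl
    have hlt : A < B := by
      refine lt_of_le_of_ne hAB ?_
      intro hEq
      have hgx : g x0 ∈ A := by rw [hEq]; exact ⟨x0, rfl⟩
      obtain ⟨y, hy⟩ := hgx
      have e1 : ℓ ((i' + 1) + b) (g x0) = ℓ (i' + 1) x0 :=
        LinearMap.congr_fun (K1 b (by omega)) x0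
      have e2 : ℓ ((i' + 1) + b) (g (M.f i' y)) = ℓ (i' + 1) (M.f i' y) :=
        LinearMap.congr_fun (K1 b (by omega)) (M.f i' y)
      have e3 : ℓ (i' + 1) (M.f i' y) = 0 := by
        have := LinearMap.congr_fun K2 y
        simpa using this
      have hy' : g (M.f i' y) = g x0 := hy
      rw [hy', e1, hx0'] at e2
      rw [e3] at e2
      exact one_ne_zero e2
    have hfr := Submodule.finrank_lt_finrank_of_lt hlt
    rw [hrA, hrB]
    omega
  · intro hr
    rw [hrA, hrB] at hr
    have hfr : finrank ℂ A < finrank ℂ B := by omega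
    have hlt : A < B := hAB.lt_of_ne (by intro hEq; rw [hEq] at hfr; exact lt_irrefl _ hfr)
    obtain ⟨v, hvB, hvA⟩ := SetLike.exists_of_lt hlt
    have hq : A.mkQ v ≠ 0 := by
      intro h0
      exact hvA ((Submodule.Quotient.mk_eq_zero A).mp h0)
    obtain ⟨φ, hφ⟩ : ∃ φ : Module.Dual ℂ (M.V ((i' + 1) + b) ⧸ A), φ (A.mkQ v) ≠ 0 := by
      by_contra hall
      push_neg at hall
      exact hq ((Module.forall_dual_apply_eq_zero_iff ℂ _).mp fun ψ => hall ψ)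
    set L : M.V ((i' + 1) + b) →ₗ[ℂ] ℂ := φ.comp A.mkQ with hLdef
    have hLA : ∀ a, a ∈ A → L a = 0 := by
      intro a ha
      have hz : A.mkQ a = 0 := (Submodule.Quotient.mk_eq_zero A).mpr ha
      simp only [hLdef, LinearMap.comp_apply, hz, map_zero]
    have hLv : L v ≠ 0 := hφ
    have hJ : ∀ k, Ucond n (i' + 1) j k → k + (j - k) = (i' + 1) + b := by
      intro k hk
      simp only [Ucond] at hk
      omega
    set d : ∀ k, M.V k →ₗ[ℂ] ℂ := fun k =>
      if hk : Ucond n (i' + 1) j k then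
        L.comp ((M.castE (hJ k hk)).toLinearMap.comp (M.F k (j - k)))
      else 0 with hd
    have hstep : ∀ k, Ucond n (i' + 1) j k → Ucond n (i' + 1) j (k + 1) →
        (d (k + 1)).comp (M.f k) = d k := by
      intro k hk hk1
      have hkj : k + 1 ≤ j := by simp only [Ucond] at hk1; omega
      simp only [hd]
      rw [dif_pos hk1, dif_pos hk]
      rw [ARep.comp_castE_F_succ M L k (j - (k + 1)) (hJ _ hk1)
        (by have := hJ _ hk1; omega)]
      exact ARep.F_index_congr M L k (by omega) _ _
    have hmemd : ∀ k x, d k x ∈ Uspace n (i' + 1) j k := by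
      intro k x
      by_cases hk : Ucond n (i' + 1) j k
      · simp only [Uspace, if_pos hk]; trivial
      · have hz : d k x = 0 := by simp only [hd]; rw [dif_neg hk]; rfl
        rw [hz]; exact Submodule.zero_mem _
    obtain ⟨x1, hx1⟩ := hvB
    have hnon : ∀ m, (i' + 1) + m ≤ j → ∃ x, d ((i' + 1) + m) x ≠ 0 := by
      intro m
      induction m with
      | zero =>
        intro _
        refine ⟨x1, ?_⟩
        have hdv : d (i' + 1) x1 = L v := by
          simp only [hd]
          rw [dif_pos hUi]
          show L (g x1) = L v
          rw [hx1]
        rw [hdv]; exact hLv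
      | succ m ih =>
        intro hm
        obtain ⟨x, hx⟩ := ih (by omega)
        refine ⟨M.f ((i' + 1) + m) x, ?_⟩
        have hc := LinearMap.congr_fun (hstep ((i' + 1) + m)
          ⟨by omega, by omega, by omega, by omega⟩
          ⟨by omega, by omega, by omega, by omega⟩) x
        show d ((i' + 1) + m + 1) (M.f ((i' + 1) + m) x) ≠ 0
        simp only [LinearMap.comp_apply] at hc
        rw [hc]
        exact hx
    refine ⟨⟨fun k => LinearMap.codRestrict (Uspace n (i' + 1) j k) (d k) (hmemd k), ?_⟩, ?_⟩
    · intro k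
      ext x
      refine Subtype.ext ?_
      have hRHS : (Uspace n (i' + 1) j (k + 1)).subtype (((Urep n (i' + 1) j).f k)
            (LinearMap.codRestrict (Uspace n (i' + 1) j k) (d k) (hmemd k) x))
          = (if Ucond n (i' + 1) j k ∧ Ucond n (i' + 1) j (k + 1)
              then (LinearMap.id : ℂ →ₗ[ℂ] ℂ) else 0) (d k x) := by
        simp only [Urep, LinearMap.restrict_apply, LinearMap.codRestrict_apply]
        rfl
      show d (k + 1) (M.f k x) = _
      refine Eq.trans ?_ hRHS.symm
      by_cases hk : Ucond n (i' + 1) j k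
      · by_cases hk1 : Ucond n (i' + 1) j (k + 1)
        · rw [if_pos ⟨hk, hk1⟩]
          have hc := LinearMap.congr_fun (hstep k hk hk1) x
          simpa using hc
        · rw [if_neg (fun h => hk1 h.2)]
          have hz : d (k + 1) (M.f k x) = 0 := by
            simp only [hd]; rw [dif_neg hk1]; rfl
          simpa using hz
      · rw [if_neg (fun h => hk h.1)]
        by_cases hk1 : Ucond n (i' + 1) j (k + 1)
        · have hk' : k = i' := by simp only [Ucond] at hk hk1; omega
          subst hk'
          have : d (k + 1) (M.f k x) = L ((g.comp (M.f k)) x) := by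
            simp only [hd]
            rw [dif_pos hUi]
            rfl
          rw [this]
          simpa using hLA _ ⟨x, rfl⟩
        · have hz : d (k + 1) (M.f k x) = 0 := by
            simp only [hd]; rw [dif_neg hk1]; rfl
          simpa using hz
    · intro k
      by_cases hk : Ucond n (i' + 1) j k
      · obtain ⟨m, rfl⟩ : ∃ m, k = (i' + 1) + m :=
          ⟨k - (i' + 1), by simp only [Ucond] at hk; omega⟩
        obtain ⟨x0, hx0⟩ := hnon m (by simp only [Ucond] at hk; omega)
        intro y
        refine ⟨(((Uspace n (i' + 1) j ((i' + 1) + m)).subtype y) / d ((i' + 1) + m) x0) • x0,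
          Subtype.ext ?_⟩
        show d ((i' + 1) + m) (_ • x0) = (Uspace n (i' + 1) j ((i' + 1) + m)).subtype y
        rw [map_smul, smul_eq_mul, div_mul_cancel₀ _ hx0]
      · intro y
        refine ⟨0, Subtype.ext ?_⟩
        show d k 0 = (Uspace n (i' + 1) j k).subtype y
        have hy : (Uspace n (i' + 1) j k).subtype y ∈ Uspace n (i' + 1) j k :=
          Subtype.prop y
        rw [map_zero]
        simp only [Uspace, if_neg hk] at hy
        exact ((Submodule.mem_bot ℂ).mp hy).symm
end

section
/- Let M be a representation of the equioriented type A_n quiver over ℂ and let 1 ≤ i ≤ j ≤ n. Then there exists a representation N of the equioriented type A_n quiver with M isomorphic to U_{i,j} ⊕ N (direct sum taken componentwise) if and only if r^M_{i,j} − r^M_{i,j+1} > r^M_{i−1,j} − r^M_{i−1,j+1} (with the conventions r^M_{0,·} = 0 and r^M_{·,n+1} = 0). -/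
open Module

/-! Put `d_a = r_{a,j} - r_{a,j+1}`. By rank–nullity `d_a = dim (ker f_j ∩ im f_{a,j})`, which is
monotone in `a`, additive under direct sums and invariant under isomorphism; for `U_{i,j}` it is
`1` at `a = i` and `0` at `a = i - 1`, so a summand `U_{i,j}` forces `d_{i-1} < d_i`.

Conversely, if `d_{i-1} < d_i` there is `v ∈ M_i` with `w = f_{i,j} v ∈ ker f_j \ im f_{i-1,j}`,
and a functional `g` on `M_j` vanishing on `im f_{i-1,j}` with `g w = 1`. Then
`c ↦ (c • f_{i,k} v)_k` is a morphism `U_{i,j} → M`, and `x ↦ (g (f_{k,j} x))_k` is a morphism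
`M → U_{i,j}` retracting it; `M` splits as `U_{i,j}` plus the kernel of the retraction. -/

open LinearMap

theorem Submodule.finrank_map_add_finrank_ker_inf {K V W : Type*} [DivisionRing K]
    [AddCommGroup V] [Module K V] [AddCommGroup W] [Module K W] [FiniteDimensional K V]
    (f : V →ₗ[K] W) (p : Submodule K V) :
    finrank K (p.map f) + finrank K ↥(ker f ⊓ p) = finrank K p := by
  have h := finrank_range_add_finrank_ker (f.domRestrict p)
  have hker : (ker f).comap p.subtype = (ker f ⊓ p).comap p.subtype := by
    rw [Submodule.comap_inf, Submodule.comap_subtype_self, inf_top_eq]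
  rwa [range_domRestrict, ker_domRestrict, hker,
    (Submodule.comapSubtypeEquivOfLe inf_le_right).finrank_eq] at h

theorem Submodule.finrank_prod {R M N : Type*} [DivisionRing R]
    [AddCommGroup M] [Module R M] [AddCommGroup N] [Module R N]
    (p : Submodule R M) (q : Submodule R N) [FiniteDimensional R p] [FiniteDimensional R q] :
    finrank R ↥(p.prod q) = finrank R p + finrank R q := by
  let e : ↥(p.prod q) ≃ₗ[R] p × q :=
    { toFun x := (⟨x.1.1, x.2.1⟩, ⟨x.1.2, x.2.2⟩)
      invFun y := ⟨(y.1, y.2), y.1.2, y.2.2⟩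
      map_add' _ _ := rfl
      map_smul' _ _ := rfl
      left_inv _ := rfl
      right_inv _ := rfl }
  rw [e.finrank_eq, Module.finrank_prod]

namespace ARep

variable {n : ℕ} (M : ARep n)

/-- The composite `f_{a,b} : M_a → M_b`, with junk value `0` when `b < a`. -/
noncomputable def fromTo (a : ℕ) : (b : ℕ) → (M.V a →ₗ[ℂ] M.V b)
  | 0 => if h : a = 0 then h ▸ LinearMap.id else 0
  | b + 1 => if h : a = b + 1 then h ▸ LinearMap.id else (M.f b).comp (fromTo a b)

@[simp]
lemma fromTo_self (a : ℕ) : M.fromTo a a = LinearMap.id := by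
  cases a <;> simp [fromTo]

lemma fromTo_succ {a b : ℕ} (h : a ≤ b) : M.fromTo a (b + 1) = (M.f b).comp (M.fromTo a b) := by
  rw [fromTo, dif_neg (by omega)]

lemma fromTo_trans {a b c : ℕ} (hab : a ≤ b) (hbc : b ≤ c) :
    M.fromTo a c = (M.fromTo b c).comp (M.fromTo a b) := by
  induction c, hbc using Nat.le_induction with
  | base => simp
  | succ c hbc ih => rw [fromTo_succ M (hab.trans hbc), fromTo_succ M hbc, ih, comp_assoc]

lemma fromTo_succ_comp_f {k j : ℕ} (h : k < j) :
    (M.fromTo (k + 1) j).comp (M.f k) = M.fromTo k j := by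
  rw [fromTo_trans M k.le_succ h, fromTo_succ M le_rfl, fromTo_self, comp_id]

lemma fromTo_add (a d : ℕ) : M.fromTo a (a + d) = M.F a d := by
  induction d with
  | zero => exact M.fromTo_self a
  | succ d ih =>
    show M.fromTo a (a + d + 1) = _
    rw [fromTo_succ M (Nat.le_add_right a d), ih]; rfl

lemma r_eq_finrank_range_fromTo {a b : ℕ} (h : a ≤ b) :
    M.r a b = finrank ℂ (range (M.fromTo a b)) := by
  obtain ⟨d, rfl⟩ := Nat.exists_eq_add_of_le h
  rw [r, Nat.add_sub_cancel_left, fromTo_add]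

lemma r_eq_r_succ_add_finrank {a j : ℕ} (h : a ≤ j) :
    M.r a j = M.r a (j + 1) + finrank ℂ ↥(ker (M.f j) ⊓ range (M.fromTo a j)) := by
  rw [r_eq_finrank_range_fromTo M h, r_eq_finrank_range_fromTo M (h.trans j.le_succ),
    fromTo_succ M h, range_comp, Submodule.finrank_map_add_finrank_ker_inf]

lemma range_fromTo_mono {a b j : ℕ} (hab : a ≤ b) (hbj : b ≤ j) :
    range (M.fromTo a j) ≤ range (M.fromTo b j) := by
  rw [fromTo_trans M hab hbj]
  exact range_comp_le_range _ _

lemma r_sub_r_succ_mono {a b j : ℕ} (hab : a ≤ b) (hbj : b ≤ j) :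
    (M.r a j : ℤ) - M.r a (j + 1) ≤ M.r b j - M.r b (j + 1) := by
  have := Submodule.finrank_mono (inf_le_inf_left (ker (M.f j)) (M.range_fromTo_mono hab hbj))
  rw [M.r_eq_r_succ_add_finrank (hab.trans hbj), M.r_eq_r_succ_add_finrank hbj]
  push_cast
  omega

lemma exists_of_r_sub_r_succ_lt {a b j : ℕ} (hab : a ≤ b) (hbj : b ≤ j)
    (h : (M.r a j : ℤ) - M.r a (j + 1) < M.r b j - M.r b (j + 1)) :
    ∃ (v : M.V b) (g : M.V j →ₗ[ℂ] ℂ), M.f j (M.fromTo b j v) = 0 ∧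
      g (M.fromTo b j v) = 1 ∧ ∀ x, g (M.fromTo a j x) = 0 := by
  obtain ⟨w, ⟨hw, v, rfl⟩, hwa⟩ :
      ∃ w ∈ ker (M.f j) ⊓ range (M.fromTo b j), w ∉ range (M.fromTo a j) := by
    by_contra! hle
    have := Submodule.finrank_mono (show ker (M.f j) ⊓ range (M.fromTo b j) ≤
      ker (M.f j) ⊓ range (M.fromTo a j) from fun w hw => ⟨hw.1, hle w hw⟩)
    rw [M.r_eq_r_succ_add_finrank (hab.trans hbj), M.r_eq_r_succ_add_finrank hbj] at h
    omega
  obtain ⟨g, hgv, hg⟩ := Submodule.exists_dual_map_eq_bot_of_notMem hwa inferInstance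
  refine ⟨(g (M.fromTo b j v))⁻¹ • v, g, ?_, ?_, fun x => ?_⟩
  · rw [map_smul, map_smul, mem_ker.mp hw, smul_zero]
  · rw [map_smul, map_smul, smul_eq_mul, inv_mul_cancel₀ hgv]
  · exact (Submodule.mem_bot ℂ).mp (hg ▸ Submodule.mem_map_of_mem (mem_range_self _ x))

lemma F_dsum (N : ARep n) (a k : ℕ) : (M.dsum N).F a k = (M.F a k).prodMap (N.F a k) := by
  induction k with
  | zero => exact prodMap_id.symm
  | succ k ih => rw [F, ih]; rfl

lemma r_dsum (N : ARep n) (a b : ℕ) : (M.dsum N).r a b = M.r a b + N.r a b := by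
  change finrank ℂ (range ((M.dsum N).F a (b - a))) = _
  rw [F_dsum]
  change finrank ℂ (range ((M.F a (b - a)).prodMap (N.F a (b - a)))) = _
  rw [range_prodMap, Submodule.finrank_prod]; rfl

end ARep

namespace ARepHom

variable {n : ℕ} {M N : ARep n}

lemma comp_F (φ : ARepHom M N) (a k : ℕ) :
    (φ.φ (a + k)).comp (M.F a k) = (N.F a k).comp (φ.φ a) := by
  induction k with
  | zero => rfl
  | succ k ih =>
    change (φ.φ (a + k + 1)).comp ((M.f (a + k)).comp (M.F a k)) = _
    rw [← comp_assoc, φ.comm, comp_assoc, ih, ARep.F, comp_assoc]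

end ARepHom

lemma ARepIso.r_eq {n : ℕ} {M N : ARep n} (e : ARepIso M N) (a b : ℕ) : M.r a b = N.r a b := by
  obtain ⟨φ, hφ⟩ := e
  have hrange : range (N.F a (b - a)) = (range (M.F a (b - a))).map (φ.φ (a + (b - a))) := by
    rw [← range_comp_of_range_eq_top _ (range_eq_top.mpr (hφ a).surjective), ← φ.comp_F,
      range_comp]
  rw [ARep.r, ARep.r, hrange, (Submodule.equivMapOfInjective _ (hφ _).injective _).finrank_eq]

section Urep

variable {n i j k : ℕ}

lemma Uspace_eq_top (h : Ucond n i j k) : Uspace n i j k = ⊤ := if_pos h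

lemma Urep_coe_eq_zero (h : ¬ Ucond n i j k) (x : (Urep n i j).V k) : x.1 = 0 :=
  (Submodule.mem_bot ℂ).mp ((if_neg h : Uspace n i j k = ⊥) ▸ x.2)

lemma Urep_subsingleton (h : ¬ Ucond n i j k) : Subsingleton ((Urep n i j).V k) :=
  ⟨fun x y => Subtype.ext ((Urep_coe_eq_zero h x).trans (Urep_coe_eq_zero h y).symm)⟩

lemma Urep_f_coe (x : (Urep n i j).V k) :
    ((Urep n i j).f k x).1 = if Ucond n i j k ∧ Ucond n i j (k + 1) then x.1 else 0 := by
  change (if _ then LinearMap.id else 0 : ℂ →ₗ[ℂ] ℂ) x.1 = _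
  split_ifs <;> rfl

lemma Urep_fromTo_coe {a b : ℕ} (hab : a ≤ b) (ha : Ucond n i j a) (hb : Ucond n i j b)
    (x : (Urep n i j).V a) : ((Urep n i j).fromTo a b x).1 = x.1 := by
  induction b, hab using Nat.le_induction with
  | base => simp
  | succ b hab ih =>
    have hb' : Ucond n i j b := by unfold Ucond at *; omega
    rw [ARep.fromTo_succ _ hab, comp_apply, Urep_f_coe, if_pos ⟨hb', hb⟩, ih hb']

lemma Urep_r {a b : ℕ} (hab : a ≤ b) :
    (Urep n i j).r a b = if Ucond n i j a ∧ Ucond n i j b then 1 else 0 := by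
  rw [ARep.r_eq_finrank_range_fromTo _ hab]
  split_ifs with h
  · have hsurj : range ((Urep n i j).fromTo a b) = ⊤ := range_eq_top.mpr fun y =>
      ⟨⟨y.1, by rw [Uspace_eq_top h.1]; trivial⟩, Subtype.ext (Urep_fromTo_coe hab h.1 h.2 _)⟩
    rw [hsurj, finrank_top]
    change finrank ℂ (Uspace n i j b) = 1
    rw [Uspace_eq_top h.2, finrank_top, finrank_self]
  · rcases not_and_or.mp h with h | h
    · have := Urep_subsingleton h
      rw [Subsingleton.elim ((Urep n i j).fromTo a b) 0, range_zero, finrank_bot]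
    · have := Urep_subsingleton h
      exact finrank_zero_of_subsingleton

end Urep

namespace ARepHom

variable {n : ℕ} {M N : ARep n}

noncomputable def ker (p : ARepHom M N) : ARep n :=
  M.sub (fun k => LinearMap.ker (p.φ k)) fun k x hx => by
    rw [mem_ker] at hx ⊢
    rw [← comp_apply, p.comm, comp_apply, hx, map_zero]

theorem iso_dsum_ker_of_comp_eq_id (p : ARepHom M N) (s : ARepHom N M)
    (hps : ∀ k, (p.φ k).comp (s.φ k) = LinearMap.id) : ARepIso M (N.dsum p.ker) := by
  have hps' : ∀ k x, p.φ k (s.φ k x) = x := fun k => LinearMap.congr_fun (hps k)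
  let π : ∀ k, M.V k →ₗ[ℂ] LinearMap.ker (p.φ k) := fun k =>
    codRestrict _ (LinearMap.id - (s.φ k).comp (p.φ k)) fun x => by simp [hps']
  refine ⟨⟨fun k => (p.φ k).prod (π k), fun k => ?_⟩, fun k => ⟨fun x y hxy => ?_, ?_⟩⟩
  · refine LinearMap.ext fun x => Prod.ext (LinearMap.congr_fun (p.comm k) x) (Subtype.ext ?_)
    change M.f k x - s.φ (k + 1) (p.φ (k + 1) (M.f k x)) = M.f k (x - s.φ k (p.φ k x))
    rw [← comp_apply (p.φ _), p.comm, comp_apply, ← comp_apply (s.φ _), s.comm, comp_apply,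
      map_sub]
  · obtain ⟨hp, hπ⟩ := Prod.ext_iff.mp hxy
    have := congrArg Subtype.val hπ
    change x - s.φ k (p.φ k x) = y - s.φ k (p.φ k y) at this
    rwa [show p.φ k x = p.φ k y from hp, sub_left_inj] at this
  · rintro ⟨u, w⟩
    refine ⟨s.φ k u + w.1, Prod.ext ?_ (Subtype.ext ?_)⟩
    · change p.φ k (s.φ k u + w.1) = u
      rw [map_add, hps', mem_ker.mp w.2, add_zero]
    · change s.φ k u + w.1 - s.φ k (p.φ k (s.φ k u + w.1)) = w.1
      rw [map_add, hps', mem_ker.mp w.2, add_zero, add_sub_cancel_left]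

end ARepHom

namespace ARep

variable {n : ℕ} (M : ARep n) {i j : ℕ}

noncomputable def toUrep (g : M.V j →ₗ[ℂ] ℂ) (hg : ∀ x, g (M.fromTo (i - 1) j x) = 0) :
    ARepHom M (Urep n i j) where
  φ k := codRestrict (Uspace n i j k) (if Ucond n i j k then g.comp (M.fromTo k j) else 0)
    fun x => by
      split_ifs with h
      · exact (Uspace_eq_top h).symm ▸ Submodule.mem_top
      · exact zero_mem _
  comm k := by
    refine LinearMap.ext fun x => Subtype.ext ?_
    change (if Ucond n i j (k + 1) then g.comp (M.fromTo (k + 1) j) else 0) (M.f k x) =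
      ((Urep n i j).f k ⟨(if Ucond n i j k then g.comp (M.fromTo k j) else 0) x, _⟩).1
    refine Eq.trans ?_ (Urep_f_coe (i := i) (j := j) _).symm
    by_cases hk1 : Ucond n i j (k + 1)
    · by_cases hk : Ucond n i j k
      · simp only [hk, hk1, and_self, if_true, ← comp_apply (g.comp _), comp_assoc,
          M.fromTo_succ_comp_f (show k < j by unfold Ucond at hk1; omega)]
      · -- entering the interval happens only from vertex `i - 1`, where `g` kills `f_{i-1,j}`
        obtain rfl : k = i - 1 := by unfold Ucond at hk hk1; omega
        simp only [hk1, hk, false_and, if_true, if_false]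
        rw [comp_apply, ← comp_apply (M.fromTo _ j),
          M.fromTo_succ_comp_f (show i - 1 < j by unfold Ucond at hk1; omega), hg]
    · simp only [hk1, and_false, if_false, LinearMap.zero_apply]

noncomputable def fromUrep (v : M.V i) (hv : M.f j (M.fromTo i j v) = 0) :
    ARepHom (Urep n i j) M where
  φ k := (Uspace n i j k).subtype.smulRight (if Ucond n i j k then M.fromTo i k v else 0)
  comm k := by
    refine LinearMap.ext fun c => ?_
    change ((Urep n i j).f k c).1 • (if Ucond n i j (k + 1) then M.fromTo i (k + 1) v else 0) =
      M.f k (c.1 • if Ucond n i j k then M.fromTo i k v else 0)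
    rw [Urep_f_coe]
    by_cases hk : Ucond n i j k
    · by_cases hk1 : Ucond n i j (k + 1)
      · simp only [hk, hk1, and_self, if_true, map_smul, M.fromTo_succ hk.2.2.1, comp_apply]
      · -- leaving the interval at `j` uses `hv`; leaving it at `n` lands in the trivial `M_{n+1}`
        rcases (show k = j ∨ n < k + 1 by unfold Ucond at hk hk1; omega) with rfl | hn
        · simp only [if_pos hk, hk1, and_false, if_false, map_smul, hv, smul_zero]
        · have := M.triv (k + 1) (Or.inr hn)
          exact Subsingleton.elim _ _
    · simp only [hk, false_and, if_false, Urep_coe_eq_zero hk, zero_smul, map_zero]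

lemma toUrep_comp_fromUrep {v : M.V i} {g : M.V j →ₗ[ℂ] ℂ} (hv : M.f j (M.fromTo i j v) = 0)
    (hg : ∀ x, g (M.fromTo (i - 1) j x) = 0) (hgv : g (M.fromTo i j v) = 1) (k : ℕ) :
    ((M.toUrep g hg).φ k).comp ((M.fromUrep v hv).φ k) = LinearMap.id := by
  by_cases hk : Ucond n i j k
  · refine LinearMap.ext fun c => Subtype.ext ?_
    change (if Ucond n i j k then g.comp (M.fromTo k j) else 0)
      (c.1 • if Ucond n i j k then M.fromTo i k v else 0) = c.1
    rw [if_pos hk, if_pos hk, map_smul, comp_apply, ← comp_apply (M.fromTo k j),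
      ← M.fromTo_trans hk.2.2.1 hk.2.2.2, hgv, smul_eq_mul, mul_one]
  · have := Urep_subsingleton hk
    exact Subsingleton.elim _ _

end ARep

theorem interval_summand_iff_general (n : ℕ) (M : ARep n) (i j : ℕ)
    (h1 : 1 ≤ i) (hij : i ≤ j) (hj : j ≤ n) :
    (∃ N : ARep n, ARepIso M ((Urep n i j).dsum N)) ↔
      (M.r (i - 1) j : ℤ) - (M.r (i - 1) (j + 1) : ℤ)
        < (M.r i j : ℤ) - (M.r i (j + 1) : ℤ) := by
  constructor
  · rintro ⟨N, e⟩
    have hN := N.r_sub_r_succ_mono (Nat.sub_le i 1) hij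
    have hU₁ : (Urep n i j).r i j = 1 := by
      rw [Urep_r hij, if_pos]; unfold Ucond; omega
    have hU₂ : (Urep n i j).r i (j + 1) = 0 := by
      rw [Urep_r (by omega), if_neg]; unfold Ucond; omega
    have hU₃ : (Urep n i j).r (i - 1) j = 0 := by
      rw [Urep_r (by omega), if_neg]; unfold Ucond; omega
    have hU₄ : (Urep n i j).r (i - 1) (j + 1) = 0 := by
      rw [Urep_r (by omega), if_neg]; unfold Ucond; omega
    simp only [e.r_eq, ARep.r_dsum, hU₁, hU₂, hU₃, hU₄]
    omega
  · intro h
    obtain ⟨v, g, hv, hgv, hg⟩ := M.exists_of_r_sub_r_succ_lt (Nat.sub_le i 1) hij h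
    exact ⟨_, (M.toUrep g hg).iso_dsum_ker_of_comp_eq_id (M.fromUrep v hv)
      (M.toUrep_comp_fromUrep hv hg hgv)⟩

theorem interval_summand_iff (n : ℕ) (hn : 1 ≤ n) (M : ARep n) (i j : ℕ)
    (h1 : 1 ≤ i) (hij : i ≤ j) (hj : j ≤ n) :
    (∃ N : ARep n, ARepIso M ((Urep n i j).dsum N)) ↔
      (M.r (i - 1) j : ℤ) - (M.r (i - 1) (j + 1) : ℤ)
        < (M.r i j : ℤ) - (M.r i (j + 1) : ℤ) :=
  interval_summand_iff_general n M i j h1 hij hj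
end

section
/- Let M be a representation of the equioriented type A_n quiver over ℂ. Then for every 1 ≤ k ≤ ℓ ≤ n, dim_ℂ Hom(M, U_{k,ℓ}) = r^M_{ℓ,ℓ} − r^M_{k−1,ℓ}, with the convention r^M_{0,ℓ} := 0. -/
open Module

namespace ARep

noncomputable def castV {n : ℕ} (M : ARep n) : {i j : ℕ} → i = j → (M.V i ≃ₗ[ℂ] M.V j)
  | _, _, rfl => LinearEquiv.refl ℂ _

@[simp] lemma castV_rfl {n} (M : ARep n) {i : ℕ} (h : i = i) (x : M.V i) : M.castV h x = x := rfl

lemma castV_f {n} (M : ARep n) {a b : ℕ} (h : a = b) (y : M.V a) :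
    M.f b (M.castV h y) = M.castV (by rw [h]) (M.f a y) := by subst h; rfl

lemma castV_trans {n} (M : ARep n) {a b c : ℕ} (h : a = b) (h' : b = c) (x : M.V a) :
    M.castV h' (M.castV h x) = M.castV (h.trans h') x := by subst h; subst h'; rfl

lemma F_peel {n} (M : ARep n) (q : ℕ) : ∀ (m : ℕ) (x : M.V q),
    M.F (q+1) m (M.f q x) = M.castV (show q+(m+1) = (q+1)+m by omega) (M.F q (m+1) x)
  | 0, x => rfl
  | (m+1), x => by
      show M.f ((q+1)+m) (M.F (q+1) m (M.f q x)) = _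
      rw [F_peel M q m x, castV_f]
      rfl

lemma F_congr {n} (M : ARep n) {q m m' t : ℕ} (hm : m = m') (h : q + m = t) (h' : q + m' = t)
    (x : M.V q) : M.castV h (M.F q m x) = M.castV h' (M.F q m' x) := by subst hm; rfl

end ARep

lemma mem_HomSubspace_iff {n : ℕ} {M N : ARep n} (φ : ∀ k, M.V k →ₗ[ℂ] N.V k) :
    φ ∈ HomSubspace M N ↔ ∀ k, (φ (k + 1)).comp (M.f k) = (N.f k).comp (φ k) := Iff.rfl

lemma Urep_ext {n i j q : ℕ} {y z : (Urep n i j).V q} (h : y.val = z.val) : y = z :=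
  Subtype.ext h

lemma Urep_zero {n i j q : ℕ} (h : ¬ Ucond n i j q) (y : (Urep n i j).V q) : y = 0 := by
  have h3 : Uspace n i j q = ⊥ := if_neg h
  exact Subtype.ext ((Submodule.eq_bot_iff _).mp h3 _ y.property)

lemma Urep_f_val {n i j q : ℕ} (y : (Urep n i j).V q) :
    ((Urep n i j).f q y).val
      = if Ucond n i j q ∧ Ucond n i j (q+1) then y.val else 0 := by
  have key : ((Urep n i j).f q y).val
      = (if Ucond n i j q ∧ Ucond n i j (q+1) then (LinearMap.id : ℂ →ₗ[ℂ] ℂ) else 0) y.val := rfl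
  rw [key]
  by_cases h : Ucond n i j q ∧ Ucond n i j (q+1)
  · rw [if_pos h, if_pos h]; rfl
  · rw [if_neg h, if_neg h]; rfl

theorem hom_dim_into_interval (n : ℕ) (hn : 1 ≤ n) (M : ARep n) (k l : ℕ)
    (h2 : 1 ≤ k) (hkl : k ≤ l) (hl : l ≤ n) :
    (Module.finrank ℂ ↥(HomSubspace M (Urep n k l)) : ℤ) =
      (M.r l l : ℤ) - (M.r (k - 1) l : ℤ) := by
  obtain ⟨a, rfl⟩ : ∃ a, k = a + 1 := ⟨k - 1, by omega⟩
  obtain ⟨d, rfl⟩ : ∃ d, l = a + (d + 1) := ⟨l - a - 1, by omega⟩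
  set l := a + (d + 1) with hldef
  set G := M.F a (d + 1) with hGdef
  let T : ↥(HomSubspace M (Urep n (a + (1:ℕ)) l)) →ₗ[ℂ] (M.V l →ₗ[ℂ] ℂ) :=
    { toFun := fun φ => (Uspace n (a+1) l l).subtype ∘ₗ (φ.1 l)
      map_add' := fun φ ψ => rfl
      map_smul' := fun c φ => rfl }
  have hTval : ∀ (φ : ↥(HomSubspace M (Urep n (a + (1:ℕ)) l))) (x : M.V l),
      T φ x = (φ.1 l x).val := fun _ _ => rfl
  have hUl : Ucond n (a+1) l l := ⟨by omega, hl, by omega, le_rfl⟩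
  -- injectivity of T
  have hinj : Function.Injective T := by
    rw [← LinearMap.ker_eq_bot, LinearMap.ker_eq_bot']
    intro φ hφ0
    have hA : ∀ m q, q + m = l → ∀ x : M.V q, φ.1 q x = 0 := by
      intro m
      induction m with
      | zero =>
        intro q hq x
        obtain rfl : q = l := by omega
        apply Urep_ext
        have := LinearMap.congr_fun hφ0 x
        rw [hTval] at this
        exact this.trans rfl
      | succ m ih =>
        intro q hq x
        by_cases hc : Ucond n (a+1) l q
        · have hc1 : Ucond n (a+1) l (q+1) := by
            obtain ⟨c1, c2, c3, c4⟩ := hc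
            exact ⟨by omega, by omega, by omega, by omega⟩
          have hcomm := LinearMap.congr_fun (φ.2 q) x
          have h0 : φ.1 (q+1) (M.f q x) = 0 := ih (q+1) (by omega) (M.f q x)
          rw [LinearMap.comp_apply, LinearMap.comp_apply, h0] at hcomm
          have hval := congrArg Subtype.val hcomm.symm
          rw [Urep_f_val, if_pos ⟨hc, hc1⟩] at hval
          apply Urep_ext
          exact hval.trans rfl
        · exact Urep_zero hc _
    apply Subtype.ext
    funext q
    apply LinearMap.ext
    intro x
    by_cases hc : Ucond n (a+1) l q
    · exact hA (l - q) q (by obtain ⟨c1, c2, c3, c4⟩ := hc; omega) x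
    · exact Urep_zero hc _
  -- range of T
  have hrange : LinearMap.range T = (LinearMap.range G).dualAnnihilator := by
    apply le_antisymm
    · rintro _ ⟨φ, rfl⟩
      rw [Submodule.mem_dualAnnihilator]
      rintro _ ⟨x, rfl⟩
      have hB : ∀ m (x : M.V a), φ.1 (a + m) (M.F a m x) = 0 := by
        intro m
        induction m with
        | zero =>
          intro x
          exact Urep_zero (by intro h; exact absurd h.2.2.1 (by omega)) _
        | succ m ih =>
          intro x
          have hcomm := LinearMap.congr_fun (φ.2 (a + m)) (M.F a m x)
          rw [LinearMap.comp_apply, LinearMap.comp_apply, ih x] at hcomm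
          show φ.1 ((a+m)+1) (M.f (a+m) (M.F a m x)) = 0
          rw [hcomm, map_zero]
      rw [hTval]
      have h00 := hB (d+1) x
      rw [show φ.1 (a + (d+1)) (M.F a (d+1) x) = φ.1 l (G x) from rfl] at h00
      rw [h00]
      rfl
    · intro g hg
      rw [Submodule.mem_dualAnnihilator] at hg
      -- build the morphism from g
      obtain ⟨Φ0, hΦval⟩ : ∃ Φ0 : ∀ q, M.V q →ₗ[ℂ] (Urep n (a + (1:ℕ)) l).V q,
          ∀ q (x : M.V q), (Φ0 q x).val
            = (if hq : Ucond n (a + (1:ℕ)) l q then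
                g ∘ₗ (M.castV (show q + (l - q) = l by
                    obtain ⟨c1, c2, c3, c4⟩ := hq; omega)).toLinearMap ∘ₗ M.F q (l - q)
              else 0) x := by
        refine ⟨fun q => LinearMap.codRestrict (Uspace n (a + (1:ℕ)) l q)
          (if hq : Ucond n (a + (1:ℕ)) l q then
            g ∘ₗ (M.castV (show q + (l - q) = l by
                obtain ⟨c1, c2, c3, c4⟩ := hq; omega)).toLinearMap ∘ₗ M.F q (l - q)
           else 0) (fun c => ?_), fun q x => rfl⟩
        by_cases hq : Ucond n (a + (1:ℕ)) l q
        · rw [show Uspace n (a + (1:ℕ)) l q = ⊤ from if_pos hq]; trivial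
        · rw [dif_neg hq]; exact Submodule.zero_mem _
      have hmem : Φ0 ∈ HomSubspace M (Urep n (a + (1:ℕ)) l) := by
        intro q
        apply LinearMap.ext
        intro x
        apply Urep_ext
        rw [LinearMap.comp_apply, LinearMap.comp_apply, Urep_f_val, hΦval, hΦval]
        by_cases hq1 : Ucond n (a+1) l (q+1)
        · rw [dif_pos hq1]
          by_cases hq : Ucond n (a+1) l q
          · rw [if_pos ⟨hq, hq1⟩, dif_pos hq]
            simp only [LinearMap.comp_apply, LinearEquiv.coe_coe]
            rw [M.F_peel, M.castV_trans]
            exact congrArg g (M.F_congr (by obtain ⟨c1,c2,c3,c4⟩ := hq1; omega) _ _ x)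
          · rw [if_neg (fun h => hq h.1)]
            obtain rfl : q = a := by
              obtain ⟨c1, c2, c3, c4⟩ := hq1
              simp only [Ucond, not_and, not_le] at hq
              omega
            simp only [LinearMap.comp_apply, LinearEquiv.coe_coe]
            rw [M.F_peel, M.castV_trans,
              M.F_congr (show l - (q+1) + 1 = d + 1 by omega) _ (show q + (d+1) = l by omega) x]
            exact hg _ ⟨x, rfl⟩
        · rw [dif_neg hq1, if_neg (fun h => hq1 h.2)]
          rfl
      refine ⟨⟨Φ0, hmem⟩, ?_⟩
      apply LinearMap.ext
      intro x
      have hT0 : T ⟨Φ0, hmem⟩ x = (Φ0 l x).val := rfl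
      rw [hT0, hΦval, dif_pos hUl]
      simp only [LinearMap.comp_apply, LinearEquiv.coe_coe]
      rw [M.F_congr (show l - l = 0 by omega) _ (show l + 0 = l by omega) x]
      rfl
  -- dimension count
  have hfr : finrank ℂ ↥(HomSubspace M (Urep n (a + (1:ℕ)) l))
      = finrank ℂ ↥((LinearMap.range G).dualAnnihilator) := by
    rw [← hrange]
    exact (LinearEquiv.ofInjective T hinj).finrank_eq
  have hquot : finrank ℂ ↥((LinearMap.range G).dualAnnihilator)
      = finrank ℂ (M.V l ⧸ LinearMap.range G) :=
    ((Subspace.quotEquivAnnihilator (LinearMap.range G)).finrank_eq).symm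
  have hsum : finrank ℂ (M.V l ⧸ LinearMap.range G) + finrank ℂ ↥(LinearMap.range G)
      = finrank ℂ (M.V l) := Submodule.finrank_quotient_add_finrank _
  have hrl : M.r l l = finrank ℂ (M.V l) := by
    show finrank ℂ ↥(LinearMap.range (M.F l (l - l))) = _
    rw [show l - l = 0 by omega]
    show finrank ℂ ↥(LinearMap.range (LinearMap.id : M.V l →ₗ[ℂ] M.V l)) = _
    rw [LinearMap.range_id, finrank_top]
  have hra : M.r (a + 1 - 1) l = finrank ℂ ↥(LinearMap.range G) := by
    show finrank ℂ ↥(LinearMap.range (M.F a (l - a))) = _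
    rw [show l - a = d + 1 by omega, ← hGdef]
  rw [hrl, hra, hfr, hquot]
  omega
end

section
/- Assume the split type: n odd with ε = −1, or n even with ε = +1. Let M be an ε-representation of the equioriented type A_n quiver with underlying graded space (M^0, ⟨−,−⟩). Then for every 1 ≤ i ≤ n with i ≤ σ(i) and every v ∈ M_i: ⟨f^M_{i,σ(i)}(v), v⟩ = 0. -/
open Module

private lemma compat' {n : ℕ} {ε : ℂ} {M : ARep n} (E : EpsForm n M ε)
    (a b : ℕ) (ha : 1 ≤ a) (hab : a + 1 ≤ n) (hb : a + b = n)
    (v : M.V a) (w : M.V b) :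
    E.B (Pi.single (a + 1) (M.f a v)) (Pi.single b w)
      + E.B (Pi.single a v) (Pi.single (b + 1) (M.f b w)) = 0 := by
  have hbe : b = n - a := by omega
  subst hbe
  exact E.compat a ha hab v w

theorem split_type_form_self_vanishes (n : ℕ) (ε : ℂ)
    (hsplit : (Odd n ∧ ε = -1) ∨ (Even n ∧ ε = 1))
    (M : ARep n) (E : EpsForm n M ε) (i : ℕ) (h1 : 1 ≤ i) (hin : i ≤ n)
    (hi : i ≤ n + 1 - i) (v : M.V i) :
    E.B (Pi.single (i + ((n + 1 - i) - i)) (M.F i ((n + 1 - i) - i) v)) (Pi.single i v) = 0 := by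
  set k := n + 1 - i - i with hk
  set C := E.B (Pi.single (i + k) (M.F i k v)) (Pi.single i v) with hC
  have key : ∀ t, t ≤ k →
      E.B (Pi.single (i + (k - t)) (M.F i (k - t) v)) (Pi.single (i + t) (M.F i t v))
        = (-1 : ℂ) ^ t * C := by
    intro t
    induction t with
    | zero => intro _; simp [ARep.F, hC]
    | succ t ih =>
      intro ht
      have ht' : t ≤ k := by omega
      obtain ⟨s, hs⟩ : ∃ s, k - t = s + 1 := ⟨k - t - 1, by omega⟩
      have hs' : k - (t + 1) = s := by omega
      have hcomp := compat' E (i + s) (i + t) (by omega) (by omega) (by omega)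
        (M.F i s v) (M.F i t v)
      have ihh := ih ht'
      rw [hs] at ihh
      have e1 : E.B (Pi.single (i + s + 1) (M.f (i + s) (M.F i s v)))
          (Pi.single (i + t) (M.F i t v)) = (-1 : ℂ) ^ t * C := ihh
      rw [hs']
      show E.B (Pi.single (i + s) (M.F i s v))
          (Pi.single (i + t + 1) (M.f (i + t) (M.F i t v))) = (-1 : ℂ) ^ (t + 1) * C
      linear_combination hcomp - e1
  have hfin : E.B (Pi.single i v) (Pi.single (i + k) (M.F i k v)) = (-1 : ℂ) ^ k * C := by
    have h := key k le_rfl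
    rw [Nat.sub_self] at h
    exact h
  have hsym : E.B (Pi.single i v) (Pi.single (i + k) (M.F i k v)) = ε * C :=
    E.eps_symm _ _
  have eq1 : ε * C = (-1 : ℂ) ^ k * C := hsym.symm.trans hfin
  show C = 0
  rcases hsplit with ⟨hodd, he⟩ | ⟨heven, he⟩
  · obtain ⟨m, hm⟩ := hodd
    have hke : Even k := ⟨m + 1 - i, by omega⟩
    rw [he, hke.neg_one_pow] at eq1
    linear_combination (-(1 : ℂ)/2) * eq1
  · obtain ⟨m, hm⟩ := heven
    have hko : Odd k := ⟨m - i, by omega⟩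
    rw [he, hko.neg_one_pow] at eq1
    linear_combination ((1 : ℂ)/2) * eq1
end
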